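/- arXiv:1412.2376 — 12 statements merged into one kernel-verified Lean document; each statement's English description precedes it below -/
import Mathlib

section
/- If G is a twin-free graph without isolated vertices, then every vertex cover of G is a locating-dominating set of G. -/
/-- `D` is a dominating set of `G`: every vertex not in `D` has a neighbor in `D`. -/
def IsDominatingSet {V : Type*} (G : SimpleGraph V) (D : Set V) : Prop :=
  ∀ v ∉ D, ∃ u ∈ D, G.Adj u v

/-- `D` is a locating-dominating set of `G`: a dominating set such that any two distinct
vertices outside `D` have distinct neighborhoods within `D`. -/
def IsLocatingDominatingSet {V : Type*} (G : SimpleGraph V) (D : Set V) : Prop :=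
  IsDominatingSet G D ∧
    ∀ u ∉ D, ∀ v ∉ D, u ≠ v →
      {w | w ∈ D ∧ G.Adj u w} ≠ {w | w ∈ D ∧ G.Adj v w}

/-- `G` is twin-free: no two distinct vertices have equal open neighborhoods
(open twins) or equal closed neighborhoods (closed twins). -/
def TwinFree {V : Type*} (G : SimpleGraph V) : Prop :=
  ∀ u v : V, u ≠ v →
    G.neighborSet u ≠ G.neighborSet v ∧
      insert u (G.neighborSet u) ≠ insert v (G.neighborSet v)

/-- `G` has no isolated vertices. -/
def NoIsolatedVertex {V : Type*} (G : SimpleGraph V) : Prop :=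
  ∀ v : V, ∃ u, G.Adj v u

/-- `C` is a vertex cover of `G`: every edge has at least one end in `C`. -/
def IsVertexCover {V : Type*} (G : SimpleGraph V) (C : Set V) : Prop :=
  ∀ u v : V, G.Adj u v → u ∈ C ∨ v ∈ C

/-! Outside a vertex cover every neighbour lies in the cover, so there the trace of a
neighbourhood on the cover is the whole open neighbourhood: separating such vertices is
exactly the absence of open twins, and dominating them is the absence of isolated vertices. -/

namespace IsVertexCover

variable {V : Type*} {G : SimpleGraph V} {C : Set V}

theorem neighborSet_subset (hC : IsVertexCover G C) {v : V} (hv : v ∉ C) :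
    G.neighborSet v ⊆ C :=
  fun w hw => (hC v w hw).resolve_left hv

theorem setOf_mem_and_adj_eq_neighborSet (hC : IsVertexCover G C) {v : V} (hv : v ∉ C) :
    {w | w ∈ C ∧ G.Adj v w} = G.neighborSet v :=
  Set.inter_eq_right.mpr (hC.neighborSet_subset hv)

theorem isDominatingSet (hC : IsVertexCover G C) (hiso : NoIsolatedVertex G) :
    IsDominatingSet G C := fun v hv =>
  let ⟨u, hvu⟩ := hiso v
  ⟨u, hC.neighborSet_subset hv hvu, hvu.symm⟩

end IsVertexCover

/-- If `G` is a twin-free graph without isolated vertices, then every vertex cover of `G`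
is a locating-dominating set of `G`. -/
theorem vertexCover_isLocatingDominatingSet {V : Type*} (G : SimpleGraph V)
    (htf : TwinFree G) (hiso : NoIsolatedVertex G) (C : Set V) (hC : IsVertexCover G C) :
    IsLocatingDominatingSet G C := by
  refine ⟨hC.isDominatingSet hiso, fun u hu v hv huv htrace => (htf u v huv).1 ?_⟩
  rwa [hC.setOf_mem_and_adj_eq_neighborSet hu, hC.setOf_mem_and_adj_eq_neighborSet hv] at htrace
end

section
/- If G is a twin-free graph of order n without isolated vertices whose independence number is at least n/2, then G has a locating-dominating set of cardinality at most n/2 (equivalently, gamma_L(G) <= n/2). -/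
/-- The location-domination number `γ_L(G)`: minimum cardinality of a
locating-dominating set of `G`. -/
noncomputable def locDomNumber {V : Type*} [Fintype V] (G : SimpleGraph V) : ℕ :=
  sInf {n : ℕ | ∃ D : Set V, IsLocatingDominatingSet G D ∧ D.ncard = n}

/-- `I` is an independent set of `G`: no two of its vertices are adjacent. -/
def IsIndependentSet {V : Type*} (G : SimpleGraph V) (I : Set V) : Prop :=
  ∀ u ∈ I, ∀ v ∈ I, ¬ G.Adj u v

/-!
The complement `D` of an independent set `I` is locating-dominating as soon as `G` has no
isolated vertices and no open twins: a vertex `u ∈ I` has all its neighbours in `D`, so it is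
dominated, and its trace `N(u) ∩ D` is its whole neighbourhood `N(u)`, which distinguishes it
from every other vertex of `I`. If `|I| ≥ n/2` then `|D| ≤ n/2`.
-/

section

variable {V : Type*} {G : SimpleGraph V}

theorem TwinFree.injective_neighborSet (htf : TwinFree G) : Function.Injective G.neighborSet :=
  fun u v huv => by_contra fun hne => (htf u v hne).1 huv

namespace IsIndependentSet

variable {I : Set V}

theorem neighborSet_subset_compl (hI : IsIndependentSet G I) {u : V} (hu : u ∈ I) :
    G.neighborSet u ⊆ Iᶜ :=
  fun _ hadj hw => hI u hu _ hw hadj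

theorem isDominatingSet_compl (hI : IsIndependentSet G I) (hiso : NoIsolatedVertex G) :
    IsDominatingSet G Iᶜ := by
  intro v hv
  rw [Set.notMem_compl_iff] at hv
  obtain ⟨u, hadj⟩ := hiso v
  exact ⟨u, hI.neighborSet_subset_compl hv hadj, hadj.symm⟩

theorem trace_compl_eq_neighborSet (hI : IsIndependentSet G I) {u : V} (hu : u ∈ I) :
    {w | w ∈ Iᶜ ∧ G.Adj u w} = G.neighborSet u := by
  ext w
  exact ⟨And.right, fun hadj => ⟨hI.neighborSet_subset_compl hu hadj, hadj⟩⟩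

theorem isLocatingDominatingSet_compl (hI : IsIndependentSet G I) (hiso : NoIsolatedVertex G)
    (hinj : Function.Injective G.neighborSet) : IsLocatingDominatingSet G Iᶜ := by
  refine ⟨hI.isDominatingSet_compl hiso, fun u hu v hv huv htrace => huv (hinj ?_)⟩
  rw [Set.notMem_compl_iff] at hu hv
  rwa [hI.trace_compl_eq_neighborSet hu, hI.trace_compl_eq_neighborSet hv] at htrace

end IsIndependentSet

theorem locDomNumber_le_ncard [Fintype V] {D : Set V} (hD : IsLocatingDominatingSet G D) :
    locDomNumber G ≤ D.ncard :=
  Nat.sInf_le ⟨D, hD, rfl⟩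

end

/-- If `G` is a twin-free graph of order `n` without isolated vertices whose independence
number is at least `n/2` (i.e. `G` has an independent set of cardinality at least `n/2`),
then `γ_L(G) ≤ n/2`. -/
theorem locDomNumber_le_half_of_indep {V : Type*} [Fintype V] (G : SimpleGraph V)
    (htf : TwinFree G) (hiso : NoIsolatedVertex G)
    (hindep : ∃ I : Set V, IsIndependentSet G I ∧ Fintype.card V ≤ 2 * I.ncard) :
    (∃ D : Set V, IsLocatingDominatingSet G D ∧ 2 * D.ncard ≤ Fintype.card V) ∧
      2 * locDomNumber G ≤ Fintype.card V := by
  obtain ⟨I, hI, hcard⟩ := hindep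
  have hLD := hI.isLocatingDominatingSet_compl hiso htf.injective_neighborSet
  have hsum : I.ncard + Iᶜ.ncard = Fintype.card V := by
    rw [Set.ncard_add_ncard_compl, Nat.card_eq_fintype_card]
  have hle := locDomNumber_le_ncard hLD
  exact ⟨⟨Iᶜ, hLD, by omega⟩, by omega⟩
end

section
/- If G is a graph with no isolated vertex, then there exists a minimum dominating set S of G (i.e., a dominating set of cardinality gamma(G)) such that every vertex v of S has an S-external private neighbor, that is, a vertex outside S that is adjacent to v but to no other vertex of S. -/
/-- The domination number `γ(G)`: minimum cardinality of a dominating set of `G`. -/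
noncomputable def dominationNumber {V : Type*} [Fintype V] (G : SimpleGraph V) : ℕ :=
  sInf {n : ℕ | ∃ D : Set V, IsDominatingSet G D ∧ D.ncard = n}

section

variable {V : Type*} (G : SimpleGraph V)

def HasPrivateNeighbor (S : Set V) (v : V) : Prop :=
  ∃ w, w ∉ S ∧ G.Adj v w ∧ ∀ x ∈ S, x ≠ v → ¬ G.Adj x w

def isolatedIn (S : Set V) : Set V :=
  {v | v ∈ S ∧ ∀ x ∈ S, ¬ G.Adj v x}

theorem isDominatingSet_univ : IsDominatingSet G Set.univ :=
  fun v hv => absurd (Set.mem_univ v) hv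

variable {G}

theorem dominationNumber_le_ncard [Fintype V] {D : Set V} (hD : IsDominatingSet G D) :
    dominationNumber G ≤ D.ncard :=
  Nat.sInf_le ⟨D, hD, rfl⟩

variable (G) in
theorem exists_isDominatingSet_ncard_eq_dominationNumber [Fintype V] :
    ∃ D, IsDominatingSet G D ∧ D.ncard = dominationNumber G :=
  Nat.sInf_mem (s := {n | ∃ D : Set V, IsDominatingSet G D ∧ D.ncard = n})
    ⟨_, Set.univ, isDominatingSet_univ G, rfl⟩

theorem IsDominatingSet.hasPrivateNeighbor_of_not_isDominatingSet_diff {D : Set V} {v x : V}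
    (hD : IsDominatingSet G D) (hx : x ∈ D) (hvx : G.Adj v x)
    (hnd : ¬ IsDominatingSet G (D \ {v})) : HasPrivateNeighbor G D v := by
  simp only [IsDominatingSet, not_forall, not_exists, not_and, exists_prop] at hnd
  obtain ⟨w, hw, hwD⟩ := hnd
  have hw_private : ∀ y ∈ D, y ≠ v → ¬ G.Adj y w := fun y hy hyv => hwD y ⟨hy, hyv⟩
  have hwS : w ∉ D := by
    intro hwS
    have hwv : w = v := by_contra fun hwv => hw ⟨hwS, hwv⟩
    exact hw_private x hx (G.ne_of_adj hvx).symm (hwv ▸ hvx.symm)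
  obtain ⟨u, hu, huw⟩ := hD w hwS
  have huv : u = v := by_contra fun huv => hw_private u hu huv huw
  exact ⟨w, hwS, huv ▸ huw, hw_private⟩

theorem IsDominatingSet.hasPrivateNeighbor_of_ncard_eq_dominationNumber [Fintype V]
    {D : Set V} {v : V} (hD : IsDominatingSet G D) (hcard : D.ncard = dominationNumber G)
    (hv : v ∈ D) (hv_iso : v ∉ isolatedIn G D) : HasPrivateNeighbor G D v := by
  obtain ⟨x, hx, hvx⟩ : ∃ x ∈ D, G.Adj v x := by
    simpa [isolatedIn, hv] using hv_iso
  refine hD.hasPrivateNeighbor_of_not_isDominatingSet_diff hx hvx fun hD' => ?_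
  have := dominationNumber_le_ncard hD'
  have := Set.ncard_sdiff_singleton_lt_of_mem hv
  omega

theorem IsDominatingSet.insert_diff_singleton {D : Set V} {u v : V} (hD : IsDominatingSet G D)
    (hno : ¬ HasPrivateNeighbor G D v) (hvu : G.Adj v u) :
    IsDominatingSet G (insert u (D \ {v})) := by
  simp only [HasPrivateNeighbor, not_exists, not_and, not_forall, not_not, exists_prop] at hno
  intro w hw
  by_cases hwv : w = v
  · exact ⟨u, Set.mem_insert _ _, hwv ▸ hvu.symm⟩
  have hwD : w ∉ D := fun hwD => hw (Set.mem_insert_of_mem _ ⟨hwD, hwv⟩)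
  obtain ⟨z, hz, hzw⟩ := hD w hwD
  by_cases hzv : z = v
  · obtain ⟨y, hy, hyv, hyw⟩ := hno w hwD (hzv ▸ hzw)
    exact ⟨y, Set.mem_insert_of_mem _ ⟨hy, hyv⟩, hyw⟩
  · exact ⟨z, Set.mem_insert_of_mem _ ⟨hz, hzv⟩, hzw⟩

theorem isolatedIn_insert_diff_singleton_subset {D : Set V} {u v x : V}
    (hv : v ∈ isolatedIn G D) (hx : x ∈ D) (hxv : x ≠ v) (hxu : G.Adj x u) :
    isolatedIn G (insert u (D \ {v})) ⊆ isolatedIn G D \ {v} := by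
  rintro y ⟨hy, hy_iso⟩
  have hyu : y ≠ u := by
    rintro rfl
    exact hy_iso x (Set.mem_insert_of_mem _ ⟨hx, hxv⟩) hxu.symm
  obtain ⟨hyD, hyv⟩ : y ∈ D \ {v} := hy.resolve_left hyu
  refine ⟨⟨hyD, fun z hz hyz => ?_⟩, hyv⟩
  by_cases hzv : z = v
  · exact hv.2 y hyD (hzv ▸ hyz.symm)
  · exact hy_iso z (Set.mem_insert_of_mem _ ⟨hz, hzv⟩) hyz

theorem IsDominatingSet.exists_ncard_isolatedIn_lt [Finite V] {D : Set V} {u v : V}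
    (hD : IsDominatingSet G D) (hv : v ∈ isolatedIn G D) (hvu : G.Adj v u)
    (hno : ¬ HasPrivateNeighbor G D v) :
    ∃ D', IsDominatingSet G D' ∧ D'.ncard = D.ncard ∧
      (isolatedIn G D').ncard < (isolatedIn G D).ncard := by
  have huD : u ∉ D := fun hu => hv.2 u hu hvu
  obtain ⟨x, hx, hxv, hxu⟩ : ∃ x ∈ D, x ≠ v ∧ G.Adj x u := by
    by_contra! h
    exact hno ⟨u, huD, hvu, h⟩
  refine ⟨_, hD.insert_diff_singleton hno hvu, Set.ncard_exchange huD hv.1, ?_⟩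
  calc (isolatedIn G (insert u (D \ {v}))).ncard
      ≤ (isolatedIn G D \ {v}).ncard :=
        Set.ncard_le_ncard (isolatedIn_insert_diff_singleton_subset hv hx hxv hxu)
    _ < (isolatedIn G D).ncard := Set.ncard_sdiff_singleton_lt_of_mem hv

end

/-- If `G` is a graph with no isolated vertex, then there exists a minimum dominating set
`S` of `G` such that every vertex `v ∈ S` has an `S`-external private neighbor: a vertex
outside `S` adjacent to `v` but to no other vertex of `S`. -/
theorem exists_minimum_dominatingSet_with_private_neighbors {V : Type*} [Fintype V]
    (G : SimpleGraph V) (hiso : ∀ v : V, ∃ u, G.Adj v u) :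
    ∃ S : Set V, IsDominatingSet G S ∧ S.ncard = dominationNumber G ∧
      ∀ v ∈ S, ∃ w, w ∉ S ∧ G.Adj v w ∧ ∀ x ∈ S, x ≠ v → ¬ G.Adj x w := by
  obtain ⟨S, ⟨hS, hcard⟩, hmin⟩ :=
    Set.exists_min_image {D : Set V | IsDominatingSet G D ∧ D.ncard = dominationNumber G}
      (fun D => (isolatedIn G D).ncard) (Set.toFinite _)
      (exists_isDominatingSet_ncard_eq_dominationNumber G)
  refine ⟨S, hS, hcard, fun v hv => ?_⟩
  by_cases hv_iso : v ∈ isolatedIn G S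
  · by_contra hno
    obtain ⟨u, hvu⟩ := hiso v
    obtain ⟨S', hS', hcard', hlt⟩ := hS.exists_ncard_isolatedIn_lt hv_iso hvu hno
    exact (hmin S' ⟨hS', hcard'.trans hcard⟩).not_gt hlt
  · exact hS.hasPrivateNeighbor_of_ncard_eq_dominationNumber hcard hv hv_iso
end

section
/- For every integer k >= 2, the graph A_k satisfies gamma_L(A_k) = k, that is, its location-domination number equals half its order. -/
/-- The graph `A_k` on vertices `x_1, …, x_{2k}` (here `Fin (2*k)`, with `x_i`
corresponding to the element of value `i - 1`) in which two distinct vertices `x_i`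
and `x_j` are adjacent if and only if `|i - j| ≤ k - 1`. -/
def Agraph (k : ℕ) : SimpleGraph (Fin (2 * k)) where
  Adj i j := i ≠ j ∧ (i : ℕ) ≤ (j : ℕ) + (k - 1) ∧ (j : ℕ) ≤ (i : ℕ) + (k - 1)
  symm := ⟨fun i j h => ⟨h.1.symm, h.2.2, h.2.1⟩⟩
  loopless := ⟨fun i h => h.1 rfl⟩

theorem sep_adj_ne_sep_adj_iff {V : Type*} {G : SimpleGraph V} {D : Set V} {u v : V} :
    {w | w ∈ D ∧ G.Adj u w} ≠ {w | w ∈ D ∧ G.Adj v w} ↔ ∃ w ∈ D, ¬(G.Adj u w ↔ G.Adj v w) := by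
  simp only [ne_eq, Set.ext_iff, Set.mem_ofPred_eq, not_forall]
  constructor
  · rintro ⟨w, hw⟩
    by_cases hwD : w ∈ D
    · exact ⟨w, hwD, by simpa [hwD] using hw⟩
    · simp [hwD] at hw
  · rintro ⟨w, hwD, hw⟩
    exact ⟨w, by simpa [hwD] using hw⟩

namespace Agraph

variable {k : ℕ}

theorem adj_iff {i j : Fin (2 * k)} :
    (Agraph k).Adj i j ↔ (i : ℕ) ≠ j ∧ (i : ℕ) ≤ j + (k - 1) ∧ (j : ℕ) ≤ i + (k - 1) := by
  simp only [Agraph, Fin.val_ne_iff]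

theorem separator_bounds {u v w : Fin (2 * k)} (huv : u < v) (hwu : w ≠ u) (hwv : w ≠ v)
    (hsep : ¬((Agraph k).Adj u w ↔ (Agraph k).Adj v w)) :
    ((u : ℕ) < w + k ∧ (w : ℕ) + k ≤ v) ∨ ((u : ℕ) + k ≤ w ∧ (w : ℕ) < v + k) := by
  rw [Fin.lt_def] at huv
  rw [← Fin.val_ne_iff] at hwu hwv
  simp only [adj_iff] at hsep
  omega

theorem card_le_ncard_add_one {D : Set (Fin (2 * k))} (hD : IsLocatingDominatingSet (Agraph k) D)
    {S : Finset (Fin (2 * k))} (hS : ∀ x ∈ S, x ∉ D) : S.card ≤ D.ncard + 1 := by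
  classical
  rcases hcard : S.card with _ | n
  · omega
  set s := S.orderEmbOfFin hcard
  have hsD : ∀ i, s i ∉ D := fun i => hS _ (S.orderEmbOfFin_mem hcard i)
  have hsep : ∀ i : Fin n,
      ∃ w ∈ D, ¬((Agraph k).Adj (s i.castSucc) w ↔ (Agraph k).Adj (s i.succ) w) :=
    fun i => sep_adj_ne_sep_adj_iff.1 <| hD.2 _ (hsD _) _ (hsD _)
      (s.injective.ne (Fin.castSucc_lt_succ (i := i)).ne)
  choose w hwD hw using hsep
  have hbounds (i : Fin n) := separator_bounds (s.strictMono (Fin.castSucc_lt_succ (i := i)))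
    (fun h => hsD i.castSucc (h ▸ hwD i)) (fun h => hsD i.succ (h ▸ hwD i)) (hw i)
  have hw_ne : ∀ i j : Fin n, i < j → w i ≠ w j := by
    intro i j hij hwij
    have hmid : s i.succ ≤ s j.castSucc := s.monotone (Fin.succ_le_castSucc_iff.2 hij)
    have := hbounds i
    have := hbounds j
    have := (s j.succ).isLt
    rw [Fin.le_def] at hmid
    rw [hwij] at *
    omega
  have hinj : Function.Injective w := by
    intro i j hij
    by_contra hne
    rcases lt_or_gt_of_ne hne with h | h
    exacts [hw_ne i j h hij, hw_ne j i h hij.symm]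
  suffices n ≤ D.ncard by omega
  calc n = (Finset.univ : Finset (Fin n)).card := (Finset.card_fin n).symm
    _ ≤ D.toFinset.card := Finset.card_le_card_of_injOn w (by simpa using hwD) hinj.injOn
    _ = D.ncard := (Set.ncard_eq_toFinset_card' D).symm

theorem le_ncard_of_isLocatingDominatingSet {D : Set (Fin (2 * k))}
    (hD : IsLocatingDominatingSet (Agraph k) D) : k ≤ D.ncard := by
  classical
  have hcompl := card_le_ncard_add_one hD (S := Dᶜ.toFinset) (by simp)
  have htotal := Set.ncard_add_ncard_compl D
  rw [Set.ncard_eq_toFinset_card' Dᶜ, Nat.card_eq_fintype_card, Fintype.card_fin] at htotal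
  omega

/-- The vertices `x_2, …, x_{k+1}`. -/
def lowerBlock (k : ℕ) : Set (Fin (2 * k)) := {i | 1 ≤ (i : ℕ) ∧ (i : ℕ) ≤ k}

theorem ncard_lowerBlock (k : ℕ) : (lowerBlock k).ncard = k := by
  rw [← Set.ncard_image_of_injective _ Fin.val_injective]
  have himage : Fin.val '' lowerBlock k = Set.Icc 1 k := by
    ext n
    simp only [lowerBlock, Set.mem_image, Set.mem_ofPred_eq, Set.mem_Icc]
    refine ⟨?_, fun hn => ⟨⟨n, by omega⟩, hn, rfl⟩⟩
    rintro ⟨i, hi, rfl⟩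
    exact hi
  rw [himage, ← Finset.coe_Icc, Set.ncard_coe_finset, Nat.card_Icc]
  omega

theorem sep_adj_lowerBlock_ne (hk : 2 ≤ k) {u v : Fin (2 * k)} (hu : u ∉ lowerBlock k)
    (hv : v ∉ lowerBlock k) (huv : u < v) :
    {w | w ∈ lowerBlock k ∧ (Agraph k).Adj u w} ≠ {w | w ∈ lowerBlock k ∧ (Agraph k).Adj v w} := by
  simp only [lowerBlock, Set.mem_ofPred_eq, not_and_or, not_le] at hu hv
  rw [Fin.lt_def] at huv
  have := v.isLt
  rw [sep_adj_ne_sep_adj_iff]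
  by_cases hu0 : (u : ℕ) = 0
  · exact ⟨⟨k, by omega⟩, by simp only [lowerBlock, Set.mem_ofPred_eq]; omega,
      by simp only [adj_iff]; omega⟩
  · exact ⟨⟨u + 1 - k, by omega⟩, by simp only [lowerBlock, Set.mem_ofPred_eq]; omega,
      by simp only [adj_iff]; omega⟩

theorem isLocatingDominatingSet_lowerBlock (hk : 2 ≤ k) :
    IsLocatingDominatingSet (Agraph k) (lowerBlock k) := by
  refine ⟨fun v hv => ?_, fun u hu v hv huv => ?_⟩
  · simp only [lowerBlock, Set.mem_ofPred_eq, not_and_or, not_le] at hv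
    have := v.isLt
    by_cases hv0 : (v : ℕ) = 0
    · exact ⟨⟨1, by omega⟩, by simp only [lowerBlock, Set.mem_ofPred_eq]; omega,
        by simp only [adj_iff]; omega⟩
    · exact ⟨⟨k, by omega⟩, by simp only [lowerBlock, Set.mem_ofPred_eq]; omega,
        by simp only [adj_iff]; omega⟩
  · rcases huv.lt_or_gt with h | h
    exacts [sep_adj_lowerBlock_ne hk hu hv h, (sep_adj_lowerBlock_ne hk hv hu h).symm]

end Agraph

/-- For every integer `k ≥ 2`, the graph `A_k` satisfies `γ_L(A_k) = k`, i.e. its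
location-domination number equals half its order. -/
theorem locDomNumber_Agraph (k : ℕ) (hk : 2 ≤ k) :
    locDomNumber (Agraph k) = k :=
  IsLeast.csInf_eq
    ⟨⟨_, Agraph.isLocatingDominatingSet_lowerBlock hk, Agraph.ncard_lowerBlock k⟩,
      fun _ ⟨_, hD, hn⟩ => hn ▸ Agraph.le_ncard_of_isLocatingDominatingSet hD⟩
end

section
/- For every integer k >= 2, the set {x_1, ..., x_{k-1}} ∪ {x_{2k}} is a locating-dominating set of the graph A_k of cardinality k. -/
/-!
Indexing vertices from `0`, the vertices outside the set are `k - 1, …, 2k - 2`. Each of them is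
dominated by `0` or by `2k - 1`, and for two of them `u < v`, the vertex `u - (k - 1)` lies in the
set and is adjacent to `u` but too far from `v`.
-/

theorem Fin.ncard_setOf_val_lt (n m : ℕ) : {i : Fin n | (i : ℕ) < m}.ncard = min n m := by
  rw [← Fin.card_filter_val_lt, ← Set.ncard_coe_finset]
  simp only [Finset.coe_filter, Finset.mem_univ, true_and]

theorem IsLocatingDominatingSet.of_lt {V : Type*} [LinearOrder V] {G : SimpleGraph V} {D : Set V}
    (hdom : IsDominatingSet G D)
    (hsep : ∀ u ∉ D, ∀ v ∉ D, u < v → ∃ w ∈ D, G.Adj u w ∧ ¬G.Adj v w) :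
    IsLocatingDominatingSet G D := by
  have key : ∀ u ∉ D, ∀ v ∉ D, u < v →
      {w | w ∈ D ∧ G.Adj u w} ≠ {w | w ∈ D ∧ G.Adj v w} := by
    intro u hu v hv huv heq
    obtain ⟨w, hw, huw, hvw⟩ := hsep u hu v hv huv
    exact hvw (heq.subset ⟨hw, huw⟩).2
  refine ⟨hdom, fun u hu v hv huv => ?_⟩
  rcases huv.lt_or_gt with h | h
  · exact key u hu v hv h
  · exact (key v hv u hu h).symm

namespace Agraph

variable {k : ℕ}

def lowerWithLast (k : ℕ) : Set (Fin (2 * k)) := {i | (i : ℕ) < k - 1 ∨ (i : ℕ) = 2 * k - 1}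

theorem mem_lowerWithLast {i : Fin (2 * k)} :
    i ∈ lowerWithLast k ↔ (i : ℕ) < k - 1 ∨ (i : ℕ) = 2 * k - 1 := Iff.rfl

theorem isDominatingSet_lowerWithLast (hk : 2 ≤ k) :
    IsDominatingSet (Agraph k) (lowerWithLast k) := by
  intro v hv
  rw [mem_lowerWithLast, not_or] at hv
  by_cases hvk : k ≤ (v : ℕ)
  · exact ⟨⟨2 * k - 1, by omega⟩, Or.inr rfl, adj_iff.2 (by simp only; omega)⟩
  · exact ⟨⟨0, by omega⟩, Or.inl (by simp only; omega), adj_iff.2 (by simp only; omega)⟩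

theorem isLocatingDominatingSet_lowerWithLast (hk : 2 ≤ k) :
    IsLocatingDominatingSet (Agraph k) (lowerWithLast k) := by
  refine .of_lt (isDominatingSet_lowerWithLast hk) fun u hu v hv huv => ?_
  rw [mem_lowerWithLast, not_or] at hu hv
  have hv' := v.isLt
  rw [Fin.lt_def] at huv
  exact ⟨⟨u - (k - 1), by omega⟩, Or.inl (by simp only; omega),
    adj_iff.2 (by simp only; omega), fun h => by rw [adj_iff] at h; simp only at h; omega⟩

theorem ncard_lowerWithLast (hk : 2 ≤ k) : (lowerWithLast k).ncard = k := by
  have hlast : lowerWithLast k =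
      insert (⟨2 * k - 1, by omega⟩ : Fin (2 * k)) {i : Fin (2 * k) | (i : ℕ) < k - 1} := by
    ext i
    simp only [mem_lowerWithLast, Set.mem_insert_iff, Set.mem_ofPred_eq, Fin.ext_iff]
    exact or_comm
  rw [hlast, Set.ncard_insert_of_notMem (by simp only [Set.mem_ofPred_eq]; omega),
    Fin.ncard_setOf_val_lt]
  omega

end Agraph

/-- For every integer `k ≥ 2`, the set `{x_1, …, x_{k-1}} ∪ {x_{2k}}` (i.e. the vertices
of value `< k - 1` together with the vertex of value `2k - 1`) is a locating-dominating
set of `A_k` of cardinality `k`. -/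
theorem Agraph_locatingDominatingSet (k : ℕ) (hk : 2 ≤ k) :
    IsLocatingDominatingSet (Agraph k)
        {i : Fin (2 * k) | (i : ℕ) < k - 1 ∨ (i : ℕ) = 2 * k - 1} ∧
      ({i : Fin (2 * k) | (i : ℕ) < k - 1 ∨ (i : ℕ) = 2 * k - 1} : Set (Fin (2 * k))).ncard
        = k :=
  ⟨Agraph.isLocatingDominatingSet_lowerWithLast hk, Agraph.ncard_lowerWithLast hk⟩
end

section
/- If G and H are two combinable graphs, then every locating-dominating set of the complete join G ⋈ H has cardinality at least gamma_L(G) + gamma_L(H); that is, gamma_L(G ⋈ H) >= gamma_L(G) + gamma_L(H). -/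
/-- `S` is a locating set of `G`: any two distinct vertices outside `S` have distinct
(possibly empty) neighborhoods within `S`. -/
def IsLocatingSet {V : Type*} (G : SimpleGraph V) (S : Set V) : Prop :=
  ∀ u ∉ S, ∀ v ∉ S, u ≠ v →
    {w | w ∈ S ∧ G.Adj u w} ≠ {w | w ∈ S ∧ G.Adj v w}

/-- The minimum cardinality of a locating set of `G`. -/
noncomputable def locNumber {V : Type*} [Fintype V] (G : SimpleGraph V) : ℕ :=
  sInf {n : ℕ | ∃ S : Set V, IsLocatingSet G S ∧ S.ncard = n}

/-- `G` is combinable: the minimum cardinality of a locating set equals `γ_L(G)`. -/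
def Combinable {V : Type*} [Fintype V] (G : SimpleGraph V) : Prop :=
  locNumber G = locDomNumber G

/-- The complete join `G ⋈ H` of two (vertex-disjoint) graphs `G` and `H`: their disjoint
union together with all edges between `V(G)` and `V(H)`. -/
def CompleteJoin {V W : Type*} (G : SimpleGraph V) (H : SimpleGraph W) :
    SimpleGraph (V ⊕ W) where
  Adj x y :=
    match x, y with
    | Sum.inl a, Sum.inl b => G.Adj a b
    | Sum.inr a, Sum.inr b => H.Adj a b
    | _, _ => True
  symm := by
    refine ⟨?_⟩
    rintro (a | a) (b | b) h
    · exact h.symm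
    · trivial
    · trivial
    · exact h.symm
  loopless := by
    refine ⟨?_⟩
    rintro (a | a) h
    · exact G.irrefl h
    · exact H.irrefl h

/-!
A locating-dominating set `D` of `G ⋈ H` splits into its parts `D_G ⊆ V(G)` and `D_H ⊆ V(H)`.
Every vertex of `G` is adjacent to all of `V(H)`, so two vertices of `G` outside `D` can only be
told apart by `D_G`: thus `D_G` is a locating set of `G` (not necessarily dominating), and
`|D_G| ≥ locNumber G = γ_L(G)` when `G` is combinable. Symmetrically `|D_H| ≥ γ_L(H)`.
-/

theorem Set.ncard_eq_ncard_preimage_inl_add_ncard_preimage_inr {α β : Type*} [Finite α]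
    [Finite β] (s : Set (α ⊕ β)) :
    s.ncard = (Sum.inl ⁻¹' s).ncard + (Sum.inr ⁻¹' s).ncard := by
  conv_lhs => rw [← Set.image_preimage_inl_union_image_preimage_inr s]
  rw [Set.ncard_union_eq Set.disjoint_image_inl_image_inr,
    Set.ncard_image_of_injective _ Sum.inl_injective,
    Set.ncard_image_of_injective _ Sum.inr_injective]

section

variable {V W : Type*} {G : SimpleGraph V} {H : SimpleGraph W}

theorem isLocatingDominatingSet_univ : IsLocatingDominatingSet G Set.univ :=
  ⟨fun v hv => absurd (Set.mem_univ v) hv, fun u hu => absurd (Set.mem_univ u) hu⟩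

theorem IsLocatingDominatingSet.isLocatingSet {D : Set V} (hD : IsLocatingDominatingSet G D) :
    IsLocatingSet G D :=
  hD.2

theorem IsLocatingSet.preimage_inl {D : Set (V ⊕ W)} (hD : IsLocatingSet (CompleteJoin G H) D) :
    IsLocatingSet G (Sum.inl ⁻¹' D) := by
  intro u hu v hv huv heq
  refine hD (.inl u) hu (.inl v) hv (Sum.inl_injective.ne huv) ?_
  ext (a | b)
  · simpa [CompleteJoin] using Set.ext_iff.mp heq a
  · simp [CompleteJoin]

theorem IsLocatingSet.preimage_inr {D : Set (V ⊕ W)} (hD : IsLocatingSet (CompleteJoin G H) D) :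
    IsLocatingSet H (Sum.inr ⁻¹' D) := by
  intro u hu v hv huv heq
  refine hD (.inr u) hu (.inr v) hv (Sum.inr_injective.ne huv) ?_
  ext (a | b)
  · simp [CompleteJoin]
  · simpa [CompleteJoin] using Set.ext_iff.mp heq b

end

section

variable {V : Type*} [Fintype V] {G : SimpleGraph V}

theorem locNumber_le_ncard {S : Set V} (hS : IsLocatingSet G S) : locNumber G ≤ S.ncard :=
  Nat.sInf_le ⟨S, hS, rfl⟩

theorem exists_isLocatingDominatingSet_ncard_eq_locDomNumber :
    ∃ D : Set V, IsLocatingDominatingSet G D ∧ D.ncard = locDomNumber G :=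
  Nat.sInf_mem (s := {n | ∃ D : Set V, IsLocatingDominatingSet G D ∧ D.ncard = n})
    ⟨_, Set.univ, isLocatingDominatingSet_univ, rfl⟩

end

theorem IsLocatingSet.locNumber_add_locNumber_le_ncard {V W : Type*} [Fintype V] [Fintype W]
    {G : SimpleGraph V} {H : SimpleGraph W} {D : Set (V ⊕ W)}
    (hD : IsLocatingSet (CompleteJoin G H) D) : locNumber G + locNumber H ≤ D.ncard := by
  rw [Set.ncard_eq_ncard_preimage_inl_add_ncard_preimage_inr D]
  exact Nat.add_le_add (locNumber_le_ncard hD.preimage_inl) (locNumber_le_ncard hD.preimage_inr)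

/-- If `G` and `H` are two combinable graphs, then every locating-dominating set of the
complete join `G ⋈ H` has cardinality at least `γ_L(G) + γ_L(H)`; that is,
`γ_L(G ⋈ H) ≥ γ_L(G) + γ_L(H)`. -/
theorem locDomNumber_completeJoin_ge {V W : Type*} [Fintype V] [Fintype W]
    (G : SimpleGraph V) (H : SimpleGraph W) (hG : Combinable G) (hH : Combinable H) :
    (∀ D : Set (V ⊕ W), IsLocatingDominatingSet (CompleteJoin G H) D →
        locDomNumber G + locDomNumber H ≤ D.ncard) ∧
      locDomNumber G + locDomNumber H ≤ locDomNumber (CompleteJoin G H) := by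
  have key : ∀ D : Set (V ⊕ W), IsLocatingDominatingSet (CompleteJoin G H) D →
      locDomNumber G + locDomNumber H ≤ D.ncard := fun D hD => by
    rw [← hG, ← hH]
    exact hD.isLocatingSet.locNumber_add_locNumber_le_ncard
  obtain ⟨D, hD, hcard⟩ :=
    exists_isLocatingDominatingSet_ncard_eq_locDomNumber (G := CompleteJoin G H)
  exact ⟨key, hcard ▸ key D hD⟩
end

section
/- Let A be a nonempty finite family of pairwise vertex-disjoint graphs, each member of which is isomorphic to A_k for some integer k >= 2, and let G be the complete join of all members of A (every vertex of each member is adjacent to every vertex of every other member). Then gamma_L(G) = |V(G)|/2. -/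
/-- The complete join of a family of pairwise vertex-disjoint graphs `H i`: their disjoint
union together with all edges between vertices lying in different members. -/
def CompleteJoinFamily {ι : Type*} {V : ι → Type*} (H : ∀ i, SimpleGraph (V i)) :
    SimpleGraph (Σ i, V i) where
  Adj x y := x ≠ y ∧ ∀ h : x.1 = y.1, (H y.1).Adj (h ▸ x.2) y.2
  symm := by
    refine ⟨?_⟩
    rintro ⟨i, a⟩ ⟨j, b⟩ ⟨hne, hadj⟩
    refine ⟨hne.symm, ?_⟩
    intro h
    dsimp only at h hadj ⊢
    cases h
    exact (hadj rfl).symm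
  loopless := ⟨fun x h => h.1 rfl⟩

section LocatingDominating

variable {V W : Type*} {G : SimpleGraph V} {G' : SimpleGraph W} {D : Set V}

theorem IsLocatingDominatingSet.preimage (φ : G ≃g G') {D' : Set W}
    (hD' : IsLocatingDominatingSet G' D') : IsLocatingDominatingSet G (φ ⁻¹' D') := by
  have nbhd_eq : ∀ u, {w | w ∈ φ ⁻¹' D' ∧ G.Adj u w} = φ ⁻¹' {w | w ∈ D' ∧ G'.Adj (φ u) w} :=
    fun u => Set.ext fun w => and_congr_right fun _ => φ.map_adj_iff.symm
  refine ⟨fun u hu => ?_, fun u hu v hv huv heq => ?_⟩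
  · obtain ⟨w, hw, hadj⟩ := hD'.1 (φ u) hu
    exact ⟨φ.symm w, by simpa using hw, by simpa using φ.symm.map_adj_iff.2 hadj⟩
  · rw [nbhd_eq, nbhd_eq] at heq
    exact hD'.2 _ hu _ hv (φ.injective.ne huv) (Set.preimage_injective.2 φ.surjective heq)

theorem locDomNumber_congr [Fintype V] [Fintype W] (φ : G ≃g G') :
    locDomNumber G = locDomNumber G' := by
  unfold locDomNumber
  congr 1
  ext n
  constructor
  · rintro ⟨D, hD, rfl⟩
    exact ⟨_, hD.preimage φ.symm,
      Set.ncard_preimage_of_injective_subset_range φ.symm.injective (by simp)⟩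
  · rintro ⟨D, hD, rfl⟩
    exact ⟨_, hD.preimage φ,
      Set.ncard_preimage_of_injective_subset_range φ.injective (by simp)⟩

theorem IsLocatingDominatingSet.of_separating_nonAdj (hdom : IsDominatingSet G D) (σ : V → V)
    (hσD : ∀ u ∉ D, σ u ∈ D) (hσ : ∀ u, ¬G.Adj u (σ u))
    (hsep : ∀ u ∉ D, ∀ v ∉ D, u ≠ v → G.Adj u (σ v) ∨ G.Adj v (σ u)) :
    IsLocatingDominatingSet G D := by
  refine ⟨hdom, fun u hu v hv huv heq => ?_⟩
  rcases hsep u hu v hv huv with h | h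
  · exact hσ v ((Set.ext_iff.1 heq (σ v)).1 ⟨hσD v hv, h⟩).2
  · exact hσ u ((Set.ext_iff.1 heq (σ u)).2 ⟨hσD u hu, h⟩).2

theorem IsLocatingDominatingSet.injOn_sdiff_neighborSet (hD : IsLocatingDominatingSet G D) :
    Set.InjOn (fun u => D \ G.neighborSet u) Dᶜ := by
  intro u hu v hv heq
  by_contra huv
  apply hD.2 u hu v hv huv
  change D ∩ G.neighborSet u = D ∩ G.neighborSet v
  rw [← Set.sdiff_sdiff_right_self, ← Set.sdiff_sdiff_right_self]
  exact congrArg (D \ ·) heq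

theorem IsLocatingDominatingSet.ncard_compl_le [Finite V] (hD : IsLocatingDominatingSet G D)
    (c : V → Set V) (hc : ∀ u ∉ D, D \ G.neighborSet u = ∅ ∨ ∃ w ∈ D, D \ G.neighborSet u = c w) :
    Dᶜ.ncard ≤ D.ncard + 1 :=
  calc Dᶜ.ncard = ((fun u => D \ G.neighborSet u) '' Dᶜ).ncard :=
        hD.injOn_sdiff_neighborSet.ncard_image.symm
    _ ≤ (insert ∅ (c '' D)).ncard := by
        refine Set.ncard_le_ncard ?_ (Set.toFinite _)
        rintro _ ⟨u, hu, rfl⟩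
        rcases hc u hu with h | ⟨w, hw, h⟩
        · exact Or.inl h
        · exact Or.inr ⟨w, hw, h.symm⟩
    _ ≤ (c '' D).ncard + 1 := Set.ncard_insert_le _ _
    _ ≤ D.ncard + 1 := by grw [Set.ncard_image_le (Set.toFinite D)]

end LocatingDominating

section CompleteJoinFamily

variable {ι : Type*} {V V' : ι → Type*} {H : ∀ i, SimpleGraph (V i)}
  {H' : ∀ i, SimpleGraph (V' i)}

theorem completeJoinFamily_adj_mk_mk_same {i : ι} {a b : V i} :
    (CompleteJoinFamily H).Adj ⟨i, a⟩ ⟨i, b⟩ ↔ (H i).Adj a b :=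
  ⟨fun h => h.2 rfl, fun h => ⟨fun he => (H i).loopless.irrefl a (by cases he; exact h),
    fun _ => h⟩⟩

theorem completeJoinFamily_adj_mk_mk_of_ne {i j : ι} (hij : i ≠ j) (a : V i) (b : V j) :
    (CompleteJoinFamily H).Adj ⟨i, a⟩ ⟨j, b⟩ :=
  ⟨fun he => hij (congrArg Sigma.fst he), fun h => absurd h hij⟩

def SimpleGraph.Iso.completeJoinFamily (e : ∀ i, H i ≃g H' i) :
    CompleteJoinFamily H ≃g CompleteJoinFamily H' where
  toEquiv := Equiv.sigmaCongrRight fun i => (e i).toEquiv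
  map_rel_iff' := by
    rintro ⟨i, a⟩ ⟨j, b⟩
    by_cases hij : i = j
    · subst hij
      exact completeJoinFamily_adj_mk_mk_same.trans
        ((e i).map_adj_iff.trans completeJoinFamily_adj_mk_mk_same.symm)
    · exact iff_of_true (completeJoinFamily_adj_mk_mk_of_ne hij _ _)
        (completeJoinFamily_adj_mk_mk_of_ne hij _ _)

end CompleteJoinFamily

theorem agraph_adj_iff {k : ℕ} {a b : Fin (2 * k)} :
    (Agraph k).Adj a b ↔ a ≠ b ∧ (a : ℕ) < b + k ∧ (b : ℕ) < a + k := by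
  have := a.isLt
  exact and_congr_right fun _ => by omega

theorem Set.Finite.exists_mem_sep_le_eq {α β : Type*} [LinearOrder β] {s : Set α} (hs : s.Finite)
    (f : α → β) {t : β} (hne : {x ∈ s | t ≤ f x}.Nonempty) :
    ∃ w ∈ s, t ≤ f w ∧ {x ∈ s | t ≤ f x} = {x ∈ s | f w ≤ f x} := by
  obtain ⟨w, ⟨hws, htw⟩, hmin⟩ := Set.exists_min_image _ f (hs.subset (Set.sep_subset _ _)) hne
  exact ⟨w, hws, htw, Set.ext fun x => ⟨fun hx => ⟨hx.1, hmin x hx⟩,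
    fun hx => ⟨hx.1, htw.trans hx.2⟩⟩⟩

namespace AgraphJoin

variable {ι : Type*} (k : ι → ℕ)

local notation "𝒥" => CompleteJoinFamily fun i => Agraph (k i)

def antipode (u : Σ i, Fin (2 * k i)) : Σ i, Fin (2 * k i) :=
  ⟨u.1, ⟨if (u.2 : ℕ) < k u.1 then u.2 + k u.1 else u.2 - k u.1, by split_ifs <;> omega⟩⟩

def halfBlock : Set (Σ i, Fin (2 * k i)) :=
  {u | 1 ≤ (u.2 : ℕ) ∧ (u.2 : ℕ) ≤ k u.1}

theorem antipode_involutive : Function.Involutive (antipode k) := by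
  rintro ⟨i, a⟩
  simp only [antipode, Sigma.mk.injEq, heq_eq_eq, true_and, Fin.ext_iff, Fin.val_mk]
  split_ifs <;> omega

theorem antipode_mem_halfBlock_iff {u : Σ i, Fin (2 * k i)} :
    antipode k u ∈ halfBlock k ↔ u ∉ halfBlock k := by
  obtain ⟨i, a⟩ := u
  simp only [halfBlock, antipode, Set.mem_ofPred_eq]
  split_ifs <;> omega

theorem two_mul_ncard_halfBlock [Fintype ι] :
    2 * (halfBlock k).ncard = Fintype.card (Σ i, Fin (2 * k i)) := by
  have hcompl : (halfBlock k)ᶜ = antipode k ⁻¹' halfBlock k :=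
    Set.ext fun _ => (antipode_mem_halfBlock_iff k).symm
  rw [← Nat.card_eq_fintype_card, ← Set.ncard_add_ncard_compl (halfBlock k), hcompl,
    Set.ncard_preimage_of_injective_subset_range (antipode_involutive k).injective
      (by simp [(antipode_involutive k).surjective.range_eq])]
  ring

theorem not_adj_antipode (u : Σ i, Fin (2 * k i)) : ¬(𝒥).Adj u (antipode k u) := by
  obtain ⟨i, a⟩ := u
  simp only [antipode, completeJoinFamily_adj_mk_mk_same, agraph_adj_iff]
  split_ifs <;> omega

theorem isDominatingSet_halfBlock (hk : ∀ i, 2 ≤ k i) : IsDominatingSet (𝒥) (halfBlock k) := by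
  rintro ⟨i, a⟩ ha
  have := hk i
  simp only [halfBlock, Set.mem_ofPred_eq] at ha
  refine ⟨⟨i, ⟨min (max a 1) (k i), by omega⟩⟩, ?_, ?_⟩
  · simp only [halfBlock, Set.mem_ofPred_eq]
    omega
  · simp only [completeJoinFamily_adj_mk_mk_same, agraph_adj_iff, ne_eq, Fin.ext_iff]
    omega

theorem adj_antipode_or_adj_antipode {u v : Σ i, Fin (2 * k i)} (hu : u ∉ halfBlock k)
    (hv : v ∉ halfBlock k) (huv : u ≠ v) :
    (𝒥).Adj u (antipode k v) ∨ (𝒥).Adj v (antipode k u) := by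
  obtain ⟨i, a⟩ := u
  obtain ⟨j, b⟩ := v
  by_cases hij : i = j
  · subst hij
    have hab : (a : ℕ) ≠ b := fun h => huv (by rw [Fin.ext h])
    simp only [halfBlock, Set.mem_ofPred_eq] at hu hv
    simp only [antipode, completeJoinFamily_adj_mk_mk_same, agraph_adj_iff, ne_eq, Fin.ext_iff]
    split_ifs <;> omega
  · exact Or.inr (completeJoinFamily_adj_mk_mk_of_ne (Ne.symm hij) _ _)

theorem isLocatingDominatingSet_halfBlock (hk : ∀ i, 2 ≤ k i) :
    IsLocatingDominatingSet (𝒥) (halfBlock k) :=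
  IsLocatingDominatingSet.of_separating_nonAdj (isDominatingSet_halfBlock k hk) (antipode k)
    (fun _ hu => (antipode_mem_halfBlock_iff k).2 hu) (not_adj_antipode k)
    (fun _ hu _ hv => adj_antipode_or_adj_antipode k hu hv)

def outerCone (D : Set (Σ i, Fin (2 * k i))) (w : Σ i, Fin (2 * k i)) :
    Set (Σ i, Fin (2 * k i)) :=
  {d ∈ D | d.1 = w.1 ∧ if k w.1 ≤ w.2 then (w.2 : ℕ) ≤ d.2 else (d.2 : ℕ) ≤ w.2}

theorem mem_sdiff_neighborSet_iff {D : Set (Σ i, Fin (2 * k i))} {i : ι} {a : Fin (2 * k i)}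
    (hu : ⟨i, a⟩ ∉ D) {d : Σ i, Fin (2 * k i)} :
    d ∈ D \ (𝒥).neighborSet ⟨i, a⟩ ↔
      d ∈ {d ∈ D | d.1 = i} ∧ (a + k i ≤ (d.2 : ℕ) ∨ (d.2 : ℕ) + k i ≤ a) := by
  obtain ⟨j, b⟩ := d
  by_cases hij : i = j
  · subst hij
    simp only [Set.mem_sdiff, SimpleGraph.mem_neighborSet, Set.mem_ofPred_eq, and_true,
      completeJoinFamily_adj_mk_mk_same, agraph_adj_iff, ne_eq, Fin.ext_iff]
    refine and_congr_right fun hb => ?_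
    have hab : (a : ℕ) ≠ b := fun h => hu (by rwa [Fin.ext h])
    omega
  · simp [completeJoinFamily_adj_mk_mk_of_ne hij, Ne.symm hij]

theorem sdiff_neighborSet_eq_empty_or_outerCone {D : Set (Σ i, Fin (2 * k i))}
    {u : Σ i, Fin (2 * k i)} (hu : u ∉ D) :
    D \ (𝒥).neighborSet u = ∅ ∨ ∃ w ∈ D, D \ (𝒥).neighborSet u = outerCone k D w := by
  obtain ⟨i, a⟩ := u
  rw [or_iff_not_imp_left, ← ne_eq, ← Set.nonempty_iff_ne_empty]
  intro hne
  have hfin : {d ∈ D | d.1 = i}.Finite := by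
    refine (Set.finite_range (Sigma.mk i)).subset ?_
    rintro ⟨_, b⟩ ⟨_, rfl⟩
    exact ⟨b, rfl⟩
  rcases lt_or_ge (a : ℕ) (k i) with ha | ha
  · have hfar : D \ (𝒥).neighborSet ⟨i, a⟩ = {d ∈ {d ∈ D | d.1 = i} | a + k i ≤ (d.2 : ℕ)} := by
      ext d
      rw [mem_sdiff_neighborSet_iff k hu]
      exact and_congr_right fun _ => or_iff_left (by omega)
    rw [hfar] at hne ⊢
    obtain ⟨⟨j, c⟩, ⟨hcD, hji⟩, hc, heq⟩ := hfin.exists_mem_sep_le_eq (fun d => (d.2 : ℕ)) hne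
    change j = i at hji
    subst hji
    change (a : ℕ) + k j ≤ c at hc
    refine ⟨⟨_, c⟩, hcD, heq.trans (Set.ext fun d => ?_)⟩
    simp only [outerCone, Set.mem_ofPred_eq, if_pos (show k j ≤ (c : ℕ) by omega), and_assoc]
  · have hfar : D \ (𝒥).neighborSet ⟨i, a⟩ = {d ∈ {d ∈ D | d.1 = i} | (d.2 : ℕ) ≤ a - k i} := by
      ext ⟨j, b⟩
      rw [mem_sdiff_neighborSet_iff k hu]
      refine and_congr_right fun ⟨_, hj⟩ => ?_
      subst hj
      omega
    rw [hfar] at hne ⊢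
    obtain ⟨⟨j, c⟩, ⟨hcD, hji⟩, hc, heq⟩ :=
      hfin.exists_mem_sep_le_eq (β := ℕᵒᵈ) (fun d => OrderDual.toDual (d.2 : ℕ)) hne
    change j = i at hji
    subst hji
    have hc' : (c : ℕ) ≤ a - k j := hc
    refine ⟨⟨_, c⟩, hcD, heq.trans (Set.ext fun d => ?_)⟩
    simp only [outerCone, Set.mem_ofPred_eq, if_neg (show ¬k j ≤ (c : ℕ) by omega), and_assoc,
      OrderDual.toDual_le_toDual]

theorem card_le_two_mul_ncard [Fintype ι] {D : Set (Σ i, Fin (2 * k i))}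
    (hD : IsLocatingDominatingSet (𝒥) D) : Fintype.card (Σ i, Fin (2 * k i)) ≤ 2 * D.ncard := by
  have hcompl := hD.ncard_compl_le (outerCone k D)
    fun _ hu => sdiff_neighborSet_eq_empty_or_outerCone k hu
  have hsum := Set.ncard_add_ncard_compl D
  have heven := two_mul_ncard_halfBlock k
  rw [Nat.card_eq_fintype_card] at hsum
  omega

end AgraphJoin

theorem locDomNumber_completeJoinFamily_of_Agraphs_general {ι : Type*} [Fintype ι]
    {V : ι → Type*} [∀ i, Fintype (V i)] (k : ι → ℕ) (hk : ∀ i, 2 ≤ k i)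
    (H : ∀ i, SimpleGraph (V i)) (hiso : ∀ i, Nonempty (H i ≃g Agraph (k i))) :
    2 * locDomNumber (CompleteJoinFamily H) = Fintype.card (Σ i, V i) := by
  have e : ∀ i, H i ≃g Agraph (k i) := fun i => (hiso i).some
  rw [locDomNumber_congr (SimpleGraph.Iso.completeJoinFamily e),
    Fintype.card_congr (Equiv.sigmaCongrRight fun i => (e i).toEquiv),
    ← AgraphJoin.two_mul_ncard_halfBlock k]
  congr 1
  refine IsLeast.csInf_eq ⟨⟨_, AgraphJoin.isLocatingDominatingSet_halfBlock k hk, rfl⟩, ?_⟩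
  rintro _ ⟨D, hD, rfl⟩
  have := AgraphJoin.card_le_two_mul_ncard k hD
  rw [← AgraphJoin.two_mul_ncard_halfBlock k] at this
  omega

/-- Let `A` be a nonempty finite family of pairwise vertex-disjoint graphs, each member of
which is isomorphic to `A_k` for some integer `k ≥ 2`, and let `G` be the complete join of
all members of `A`. Then `γ_L(G) = |V(G)|/2`. -/
theorem locDomNumber_completeJoinFamily_of_Agraphs {ι : Type*} [Fintype ι] [DecidableEq ι]
    [Nonempty ι] {V : ι → Type*} [∀ i, Fintype (V i)] (k : ι → ℕ) (hk : ∀ i, 2 ≤ k i)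
    (H : ∀ i, SimpleGraph (V i)) (hiso : ∀ i, Nonempty (H i ≃g Agraph (k i))) :
    2 * locDomNumber (CompleteJoinFamily H) = Fintype.card (Σ i, V i) :=
  locDomNumber_completeJoinFamily_of_Agraphs_general k hk H hiso
end

section
/- For every tree T in the family 𝒯, with perfect matching M and black/white coloring as in the definition of 𝒯, the set of black vertices of T is a locating-dominating set of T of cardinality half the order of T. -/
/-- `v` is a leaf of `G`: it has exactly one neighbor. -/
def IsLeaf {V : Type*} (G : SimpleGraph V) (v : V) : Prop :=
  (G.neighborSet v).ncard = 1

/-- `M` is a perfect matching of `G` and `c` a black/white coloring (`true` = black,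
`false` = white) such that every edge of `M` has one white end and one black end, and
every white vertex is either a leaf, or has degree 2 and is adjacent to a black vertex
that has a white leaf as a neighbor. -/
def GoodMatchingColoring {V : Type*} (G : SimpleGraph V) (M : G.Subgraph)
    (c : V → Bool) : Prop :=
  M.IsPerfectMatching ∧
    (∀ u v : V, M.Adj u v → c u ≠ c v) ∧
    (∀ w : V, c w = false →
      IsLeaf G w ∨
        ((G.neighborSet w).ncard = 2 ∧
          ∃ b : V, G.Adj w b ∧ c b = true ∧
            ∃ l : V, G.Adj b l ∧ c l = false ∧ IsLeaf G l))

/-- The family `𝒯` of trees admitting a perfect matching together with a black/white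
coloring as in `GoodMatchingColoring`. -/
def FamilyT {V : Type*} (G : SimpleGraph V) : Prop :=
  G.IsTree ∧ ∃ (M : G.Subgraph) (c : V → Bool), GoodMatchingColoring G M c

/-!
Every white vertex is matched to a black neighbour, so the black vertices dominate, and the
matching pairs black with white vertices, so exactly half of the vertices are black. If two
distinct white vertices `u`, `v` had the same black neighbours, each would be adjacent to the
other's mate; the mates are distinct, so `u`, `v` and the two mates would form a 4-cycle.
-/

namespace SimpleGraph

variable {V : Type*} {G : SimpleGraph V}

theorem IsAcyclic.subsingleton_commonNeighbors (hG : G.IsAcyclic) {u v : V} (huv : u ≠ v) :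
    (G.commonNeighbors u v).Subsingleton := by
  have isPath : ∀ {x} (hux : G.Adj u x) (hvx : G.Adj v x),
      (Walk.cons hux (Walk.cons hvx.symm Walk.nil)).IsPath := fun hux hvx => by
    simp [Walk.isPath_def, huv, hux.ne, hvx.ne']
  intro a ha b hb
  rw [mem_commonNeighbors] at ha hb
  have := (hG.subsingleton_path u v).elim ⟨_, isPath ha.1 ha.2⟩ ⟨_, isPath hb.1 hb.2⟩
  simpa using congrArg (fun p : G.Path u v => p.1.support) this

namespace Subgraph

variable {M : G.Subgraph} {c : V → Bool}

theorem IsPerfectMatching.exists_adj_true_of_false (hM : M.IsPerfectMatching)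
    (hc : ∀ u v, M.Adj u v → c u ≠ c v) {v : V} (hv : c v = false) :
    ∃ w, M.Adj v w ∧ c w = true := by
  obtain ⟨w, hvw⟩ := (hM.1 (hM.2 v)).exists
  exact ⟨w, hvw, by simpa [hv] using (hc v w hvw).symm⟩

theorem IsPerfectMatching.isLocatingDominatingSet (hG : G.IsAcyclic) (hM : M.IsPerfectMatching)
    (hc : ∀ u v, M.Adj u v → c u ≠ c v) : IsLocatingDominatingSet G {v | c v = true} := by
  refine ⟨fun v hv => ?_, fun u hu v hv huv hN => ?_⟩
  · obtain ⟨w, hvw, hw⟩ := hM.exists_adj_true_of_false hc (by simpa using hv)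
    exact ⟨w, hw, (M.adj_sub hvw).symm⟩
  · obtain ⟨u', huu', hu'⟩ := hM.exists_adj_true_of_false hc (by simpa using hu)
    obtain ⟨v', hvv', hv'⟩ := hM.exists_adj_true_of_false hc (by simpa using hv)
    have hvu' : G.Adj v u' := ((Set.ext_iff.mp hN u').mp ⟨hu', M.adj_sub huu'⟩).2
    have huv' : G.Adj u v' := ((Set.ext_iff.mp hN v').mpr ⟨hv', M.adj_sub hvv'⟩).2
    have hmates : u' = v' := hG.subsingleton_commonNeighbors huv
      ⟨M.adj_sub huu', hvu'⟩ ⟨huv', M.adj_sub hvv'⟩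
    exact huv (hM.1.eq_of_adj_right huu' (hmates ▸ hvv'))

theorem IsPerfectMatching.two_mul_ncard_eq_card [Finite V] (hM : M.IsPerfectMatching)
    (hc : ∀ u v, M.Adj u v → c u ≠ c v) : 2 * {v | c v = true}.ncard = Nat.card V := by
  choose mate hmate using fun v => (hM.1 (hM.2 v)).exists
  have hinj : mate.Injective := fun u v h => hM.1.eq_of_adj_right (hmate u) (h ▸ hmate v)
  have himage : mate '' {v | c v = true} = {v | c v = true}ᶜ := by
    ext w
    constructor
    · rintro ⟨v, hv : c v = true, rfl⟩
      simpa [hv] using (hc v (mate v) (hmate v)).symm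
    · intro hw
      obtain ⟨v, hwv, hv⟩ := hM.exists_adj_true_of_false hc (by simpa using hw)
      exact ⟨v, hv, hM.1.eq_of_adj_left (hmate v) hwv.symm⟩
  rw [two_mul]
  nth_rw 2 [← Set.ncard_image_of_injective _ hinj]
  rw [himage, Set.ncard_add_ncard_compl]

end Subgraph

end SimpleGraph

/-- For every tree `T` in the family `𝒯`, with perfect matching `M` and black/white
coloring `c` as in the definition of `𝒯`, the set of black vertices of `T` is a
locating-dominating set of `T` of cardinality half the order of `T`. -/
theorem blackSet_isLocatingDominatingSet {V : Type*} [Fintype V] (T : SimpleGraph V)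
    (hT : T.IsTree) (M : T.Subgraph) (c : V → Bool) (h : GoodMatchingColoring T M c) :
    IsLocatingDominatingSet T {v : V | c v = true} ∧
      2 * ({v : V | c v = true} : Set V).ncard = Fintype.card V := by
  obtain ⟨hM, hc, -⟩ := h
  refine ⟨hM.isLocatingDominatingSet hT.isAcyclic hc, ?_⟩
  rw [← Nat.card_eq_fintype_card]
  exact hM.two_mul_ncard_eq_card hc
end

section
/- If G is a twin-free co-bipartite graph of order n with no isolated vertices, then gamma_L(G) <= n/2. -/
open scoped symmDiff
open Finset

namespace Finset

variable {α : Type*} [DecidableEq α]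

theorem mem_iff_mem_of_symmDiff_eq_singleton {S T : Finset α} {a b : α}
    (h : S ∆ T = {b}) (hab : a ≠ b) : a ∈ S ↔ a ∈ T := by
  have : a ∉ S ∆ T := by rw [h, mem_singleton]; exact hab
  rw [mem_symmDiff] at this
  tauto

theorem card_filter_symmDiff_eq_singleton_le (F : Finset (Finset α)) (s : Finset α) :
    #{a ∈ s | ∃ S ∈ F, ∃ T ∈ F, S ∆ T = {a}} ≤ #F - 1 := by
  induction F using Finset.strongInduction with
  | _ F ih =>
  rcases {a ∈ s | ∃ S ∈ F, ∃ T ∈ F, S ∆ T = {a}}.eq_empty_or_nonempty with hempty | ⟨a, ha⟩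
  · simp [hempty]
  obtain ⟨-, S, hS, T, hT, hST⟩ := mem_filter.1 ha
  have haST : a ∈ S ∆ T := hST ▸ mem_singleton_self a
  set F₁ := {X ∈ F | a ∈ X}
  set F₀ := {X ∈ F | a ∉ X}
  have hF₀ : F₀ ⊂ F := filter_ssubset.2 <| by
    rcases mem_symmDiff.1 haST with h | h
    exacts [⟨S, hS, not_not.2 h.1⟩, ⟨T, hT, not_not.2 h.1⟩]
  have hF₁ : F₁ ⊂ F := filter_ssubset.2 <| by
    rcases mem_symmDiff.1 haST with h | h
    exacts [⟨T, hT, h.2⟩, ⟨S, hS, h.2⟩]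
  -- Two sets differing only at `b ≠ a` lie on the same side of the split `F = F₁ ∪ F₀`.
  have hsub : {b ∈ s | ∃ S ∈ F, ∃ T ∈ F, S ∆ T = {b}} ⊆
      insert a ({b ∈ s | ∃ S ∈ F₀, ∃ T ∈ F₀, S ∆ T = {b}} ∪
        {b ∈ s | ∃ S ∈ F₁, ∃ T ∈ F₁, S ∆ T = {b}}) := by
    intro b hb
    obtain ⟨hbs, S', hS', T', hT', hST'⟩ := mem_filter.1 hb
    rcases eq_or_ne a b with rfl | hab
    · exact mem_insert_self _ _
    have hiff := mem_iff_mem_of_symmDiff_eq_singleton hST' hab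
    refine mem_insert_of_mem (mem_union.2 ?_)
    by_cases haS' : a ∈ S'
    · exact .inr (mem_filter.2 ⟨hbs, S', mem_filter.2 ⟨hS', haS'⟩, T',
        mem_filter.2 ⟨hT', hiff.1 haS'⟩, hST'⟩)
    · exact .inl (mem_filter.2 ⟨hbs, S', mem_filter.2 ⟨hS', haS'⟩, T',
        mem_filter.2 ⟨hT', mt hiff.2 haS'⟩, hST'⟩)
  have hsplit : #F₁ + #F₀ = #F := card_filter_add_card_filter_not _
  have := (card_le_card hsub).trans ((card_insert_le _ _).trans
    (Nat.add_le_add_right (card_union_le _ _) 1))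
  have := ih F₀ hF₀
  have := ih F₁ hF₁
  have := card_lt_card hF₀
  have := card_lt_card hF₁
  omega

theorem exists_injOn_erase_of_card_le {F : Finset (Finset α)} {s : Finset α}
    (hs : s.Nonempty) (hF : #F ≤ #s) : ∃ a ∈ s, Set.InjOn (fun S : Finset α => S.erase a) F := by
  obtain ⟨a, has, hgood⟩ := exists_mem_notMem_of_card_lt_card
    (s := {a ∈ s | ∃ S ∈ F, ∃ T ∈ F, S ∆ T = {a}}) (t := s) <| by
      have := card_filter_symmDiff_eq_singleton_le F s
      have := hs.card_pos
      omega
  refine ⟨a, has, fun S hS T hT hST => by_contra fun hne => ?_⟩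
  have hsub : S ∆ T ⊆ {a} := fun b hb => by
    rw [mem_singleton]
    by_contra hba
    have hbST : b ∈ S ↔ b ∈ T := by simpa [hba] using congrArg (b ∈ ·) hST
    rw [mem_symmDiff] at hb
    tauto
  rcases subset_singleton_iff.1 hsub with h | h
  · exact hne (symmDiff_eq_bot.1 h)
  · exact hgood (mem_filter.2 ⟨has, S, hS, T, hT, h⟩)

end Finset

section LocatingDomination

variable {V : Type*} {G : SimpleGraph V}

theorem isLocatingDominatingSet_iff_injOn {D : Set V} :
    IsLocatingDominatingSet G D ↔
      IsDominatingSet G D ∧ Set.InjOn (fun v => G.neighborSet v ∩ D) Dᶜ := by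
  refine and_congr_right fun _ => ⟨fun h u hu v hv huv => ?_, fun h u hu v hv huv heq => ?_⟩
  · by_contra hne
    exact h u hu v hv hne ((Set.inter_comm _ _).trans (huv.trans (Set.inter_comm _ _)))
  · exact huv (h hu hv ((Set.inter_comm _ _).trans (heq.trans (Set.inter_comm _ _))))

theorem injOn_neighborSet_inter_of_subset {A D W : Set V} (hAD : A ⊆ D)
    (hinj : Set.InjOn (fun v => G.neighborSet v ∩ A) W) :
    Set.InjOn (fun v => G.neighborSet v ∩ D) W := fun u hu v hv huv => hinj hu hv <| by
  simp only at huv ⊢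
  rw [← Set.inter_eq_right.2 hAD, ← Set.inter_assoc, huv, Set.inter_assoc]

theorem isLocatingDominatingSet_of_injOn {A D : Set V} (hAD : A ⊆ D)
    (hdom : IsDominatingSet G D) (hinj : Set.InjOn (fun v => G.neighborSet v ∩ A) Dᶜ) :
    IsLocatingDominatingSet G D :=
  isLocatingDominatingSet_iff_injOn.2 ⟨hdom, injOn_neighborSet_inter_of_subset hAD hinj⟩

end LocatingDomination

section CoBipartite

variable {V : Type*} {G : SimpleGraph V} {A : Set V}

theorem insert_neighborSet_eq_of_isClique_compl (hB : G.IsClique Aᶜ) {w : V} (hw : w ∉ A) :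
    insert w (G.neighborSet w) = Aᶜ ∪ (G.neighborSet w ∩ A) := by
  ext x
  rcases eq_or_ne x w with rfl | hxw
  · simp [hw]
  by_cases hxA : x ∈ A
  · simp [hxA, hxw]
  · simp [hxA, hxw, hB hw hxA hxw.symm]

theorem TwinFree.injOn_neighborSet_inter (htf : TwinFree G) (hB : G.IsClique Aᶜ) :
    Set.InjOn (fun v => G.neighborSet v ∩ A) Aᶜ := fun u hu v hv huv =>
  by_contra fun hne => (htf u v hne).2 <| by
    simp only at huv
    rw [insert_neighborSet_eq_of_isClique_compl hB hu,
      insert_neighborSet_eq_of_isClique_compl hB hv, huv]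

theorem TwinFree.isLocatingDominatingSet (htf : TwinFree G) (hB : G.IsClique Aᶜ)
    (hdom : IsDominatingSet G A) : IsLocatingDominatingSet G A :=
  isLocatingDominatingSet_of_injOn subset_rfl hdom (htf.injOn_neighborSet_inter hB)

theorem TwinFree.isLocatingDominatingSet_insert (htf : TwinFree G) (hB : G.IsClique Aᶜ)
    {v₀ : V} (hv₀ : v₀ ∉ A) : IsLocatingDominatingSet G (insert v₀ A) := by
  have hcompl : (insert v₀ A)ᶜ ⊆ Aᶜ := Set.compl_subset_compl.2 (Set.subset_insert _ _)
  refine isLocatingDominatingSet_of_injOn (Set.subset_insert _ _) (fun v hv => ?_)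
    ((htf.injOn_neighborSet_inter hB).mono hcompl)
  exact ⟨v₀, Set.mem_insert _ _, hB hv₀ (hcompl hv) (fun h => hv (h ▸ Set.mem_insert _ _))⟩

theorem isLocatingDominatingSet_insert_diff_singleton (hA : G.IsClique A) (hB : G.IsClique Aᶜ)
    {a b v₀ : V} (ha : a ∈ A) (hb : b ∈ A) (hba : b ≠ a) (hv₀ : v₀ ∉ A) (hv₀a : ¬ G.Adj a v₀)
    (hinj : Set.InjOn (fun v => G.neighborSet v ∩ (A \ {a})) (Aᶜ \ {v₀})) :
    IsLocatingDominatingSet G (insert v₀ (A \ {a})) := by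
  have hcompl : (insert v₀ (A \ {a}))ᶜ ⊆ insert a (Aᶜ \ {v₀}) := by
    intro v hv
    simp only [Set.mem_compl_iff, Set.mem_insert_iff, Set.mem_sdiff, Set.mem_singleton_iff] at hv ⊢
    tauto
  refine isLocatingDominatingSet_iff_injOn.2 ⟨fun v hv => ?_, ?_⟩
  · rcases hcompl hv with rfl | ⟨hvA, hvv₀⟩
    · exact ⟨b, Set.mem_insert_of_mem _ ⟨hb, hba⟩, hA hb ha hba⟩
    · exact ⟨v₀, Set.mem_insert _ _, hB hv₀ hvA (Ne.symm hvv₀)⟩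
  refine ((Set.injOn_insert fun h => h.1 ha).2 ⟨injOn_neighborSet_inter_of_subset
    (Set.subset_insert _ _) hinj, ?_⟩).mono hcompl
  -- `v₀` is adjacent to every vertex of its clique except itself, but not to `a`.
  rintro ⟨w, ⟨hwA, hwv₀⟩, hw⟩
  have hv₀w : v₀ ∈ G.neighborSet w ∩ insert v₀ (A \ {a}) := ⟨hB hwA hv₀ hwv₀, Set.mem_insert _ _⟩
  simp only at hw
  rw [hw] at hv₀w
  exact hv₀a hv₀w.1

end CoBipartite

section Finite

variable {V : Type*} [Fintype V] [DecidableEq V] {G : SimpleGraph V}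

theorem TwinFree.exists_injOn_neighborSet_inter_diff_singleton [DecidableRel G.Adj]
    (htf : TwinFree G) {A W : Finset V} (hB : G.IsClique (A : Set V)ᶜ) (hW : W ⊆ Aᶜ)
    (hA : A.Nonempty) (hWA : #W ≤ #A) :
    ∃ a ∈ A, Set.InjOn (fun v => G.neighborSet v ∩ (A \ {a} : Set V)) W := by
  let trace v := G.neighborFinset v ∩ A
  have htrace : Set.InjOn trace W := fun u hu v hv huv =>
    htf.injOn_neighborSet_inter hB (by simpa using hW hu) (by simpa using hW hv) <| by
      simpa [trace] using congrArg ((↑) : Finset V → Set V) huv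
  obtain ⟨a, ha, herase⟩ := exists_injOn_erase_of_card_le hA (card_image_le.trans hWA)
    (F := W.image trace)
  refine ⟨a, ha, fun u hu v hv huv => (herase.comp htrace ?_) hu hv ?_⟩
  · exact fun w hw => mem_coe.2 (mem_image_of_mem trace hw)
  · apply coe_injective
    simpa [trace, Set.inter_sdiff_assoc] using huv

theorem TwinFree.two_le_card_of_isClique_compl (htf : TwinFree G) (hiso : NoIsolatedVertex G)
    {A : Finset V} (hB : G.IsClique (A : Set V)ᶜ) {v₀ : V} (hv₀ : v₀ ∉ A)
    (hv₀A : ∀ a ∈ A, ¬ G.Adj a v₀) (hcard : #Aᶜ ≤ #A + 1) : 2 ≤ #A := by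
  by_contra! hA
  obtain hA₀ | hA₁ : #A = 0 ∨ #A = 1 := by omega
  · -- a neighbour of `v₀` would be its closed twin
    obtain ⟨u, hu⟩ := hiso v₀
    rw [card_eq_zero] at hA₀
    subst hA₀
    exact G.ne_of_adj hu (htf.injOn_neighborSet_inter hB (by simp) (by simp) (by simp)).symm
  · -- the only vertex `a` of `A` and `v₀` would be open twins
    obtain ⟨a, rfl⟩ := card_eq_one.1 hA₁
    obtain ⟨u, hau⟩ := hiso a
    have hav₀ : ¬ G.Adj a v₀ := hv₀A a (mem_singleton_self a)
    have hua : u ≠ a := (G.ne_of_adj hau).symm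
    have hv₀a : v₀ ≠ a := by simpa using hv₀
    have huv₀ : u ≠ v₀ := by rintro rfl; exact hav₀ hau
    have hcompl : {v₀, u} = ({a}ᶜ : Finset V) :=
      eq_of_subset_of_card_le (by simp [hv₀a.symm, hua.symm])
        (by rw [card_pair huv₀.symm]; omega)
    refine (htf a v₀ hv₀a.symm).1 (Set.ext fun x => ?_)
    simp only [SimpleGraph.mem_neighborSet]
    rcases eq_or_ne x a with rfl | hxa
    · exact iff_of_false G.irrefl (mt G.adj_symm hav₀)
    have hx : x ∈ ({v₀, u} : Finset V) := hcompl ▸ by simpa using hxa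
    rcases mem_insert.1 hx with rfl | hx
    · simp [hav₀]
    · rw [mem_singleton.1 hx]
      exact iff_of_true hau (hB (by simpa using hv₀a) (by simpa using hua) huv₀.symm)

theorem TwinFree.exists_isLocatingDominatingSet_two_mul_card_le (htf : TwinFree G)
    (hiso : NoIsolatedVertex G) {A : Finset V} (hA : G.IsClique (A : Set V))
    (hB : G.IsClique (A : Set V)ᶜ) (hAB : 2 * #A ≤ Fintype.card V) :
    ∃ D : Finset V, IsLocatingDominatingSet G D ∧ 2 * #D ≤ Fintype.card V := by
  classical
  have hsum : #A + #Aᶜ = Fintype.card V := card_add_card_compl A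
  by_cases hdom : IsDominatingSet G A
  · exact ⟨A, htf.isLocatingDominatingSet hB hdom, hAB⟩
  obtain ⟨v₀, hv₀, hv₀A⟩ : ∃ v₀ ∉ A, ∀ a ∈ A, ¬ G.Adj a v₀ := by
    simpa [IsDominatingSet] using hdom
  by_cases hroom : 2 * #A + 2 ≤ Fintype.card V
  · refine ⟨insert v₀ A, by simpa using htf.isLocatingDominatingSet_insert hB hv₀, ?_⟩
    rw [card_insert_of_notMem hv₀]
    omega
  have hA₂ := htf.two_le_card_of_isClique_compl hiso hB hv₀ hv₀A (by omega)
  obtain ⟨a, ha, hinj⟩ := htf.exists_injOn_neighborSet_inter_diff_singleton hB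
    (W := Aᶜ.erase v₀) (erase_subset _ _) (card_pos.1 (by omega))
    (by rw [card_erase_of_mem (by simpa using hv₀)]; omega)
  obtain ⟨b, hb, hba⟩ := exists_mem_ne hA₂ a
  refine ⟨insert v₀ (A.erase a), ?_, ?_⟩
  · simpa using isLocatingDominatingSet_insert_diff_singleton hA hB ha hb hba hv₀ (hv₀A a ha)
      (by simpa using hinj)
  · rw [card_insert_of_notMem (by simp [hv₀]), card_erase_of_mem ha]
    omega

end Finite

/-- If `G` is a twin-free co-bipartite graph of order `n` (its vertex set can be
partitioned into two cliques) with no isolated vertices, then `γ_L(G) ≤ n/2`. -/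
theorem locDomNumber_le_half_of_coBipartite {V : Type*} [Fintype V] (G : SimpleGraph V)
    (htf : TwinFree G) (hiso : NoIsolatedVertex G)
    (hcb : ∃ s : Set V, G.IsClique s ∧ G.IsClique sᶜ) :
    2 * locDomNumber G ≤ Fintype.card V := by
  classical
  obtain ⟨s, hs, hsc⟩ := hcb
  obtain ⟨D, hD, hcard⟩ :
      ∃ D : Finset V, IsLocatingDominatingSet G D ∧ 2 * #D ≤ Fintype.card V := by
    have := card_add_card_compl s.toFinset
    rcases le_total (2 * #s.toFinset) (Fintype.card V) with h | h
    · exact htf.exists_isLocatingDominatingSet_two_mul_card_le hiso (by simpa using hs)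
        (by simpa using hsc) h
    · refine htf.exists_isLocatingDominatingSet_two_mul_card_le hiso (A := s.toFinsetᶜ)
        (by simpa using hsc) (by simpa using hs) ?_
      omega
  calc 2 * locDomNumber G ≤ 2 * #D :=
        Nat.mul_le_mul_left 2 (Nat.sInf_le ⟨D, hD, Set.ncard_coe_finset D⟩)
    _ ≤ Fintype.card V := hcard
end

section
/- If G is a twin-free split graph of order n with no isolated vertices, then gamma_L(G) <= n/2. -/
/-!
Choose the split partition so that every clique vertex has a neighbour on the independent side:
if a clique vertex `x` has none, move `x` to the independent side, where it then dominates the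
remaining clique. Both sides are now locating-dominating. The independent side dominates the
clique, and a clique vertex's trace on it determines its closed neighbourhood, so the absence of
closed twins separates clique vertices. The clique dominates the independent side, as there are
no isolated vertices, and contains every neighbour of an independent vertex, so the absence of
open twins separates those. One of the two sides has at most `n / 2` vertices.
-/

section

variable {V : Type*} {G : SimpleGraph V} {D : Set V}

lemma two_mul_locDomNumber_le_of_compl [Fintype V] (hD : IsLocatingDominatingSet G D)
    (hDc : IsLocatingDominatingSet G Dᶜ) : 2 * locDomNumber G ≤ Fintype.card V := by
  have h₁ : locDomNumber G ≤ D.ncard := Nat.sInf_le ⟨D, hD, rfl⟩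
  have h₂ : locDomNumber G ≤ Dᶜ.ncard := Nat.sInf_le ⟨Dᶜ, hDc, rfl⟩
  have h₃ : D.ncard + Dᶜ.ncard = Fintype.card V := by
    rw [Set.ncard_add_ncard_compl, Nat.card_eq_fintype_card]
  omega

lemma insert_neighborSet_eq_union_of_isClique_compl (hc : G.IsClique Dᶜ) {u : V} (hu : u ∉ D) :
    insert u (G.neighborSet u) = Dᶜ ∪ {w | w ∈ D ∧ G.Adj u w} := by
  ext w
  by_cases hw : w ∈ D
  · have : w ≠ u := by rintro rfl; exact hu hw
    simp [hw, this]
  · by_cases hwu : w = u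
    · simp [hwu, hu]
    · simp [hw, hwu, hc hu hw (Ne.symm hwu)]

lemma neighborSet_eq_of_isIndepSet_compl (hi : G.IsIndepSet Dᶜ) {u : V} (hu : u ∉ D) :
    G.neighborSet u = {w | w ∈ D ∧ G.Adj u w} := by
  ext w
  refine ⟨fun hadj => ⟨?_, hadj⟩, And.right⟩
  by_contra hw
  exact hi hu hw hadj.ne hadj

lemma isLocatingDominatingSet_of_isClique_compl (hdom : IsDominatingSet G D)
    (hc : G.IsClique Dᶜ)
    (hG : ∀ u v, u ≠ v → insert u (G.neighborSet u) ≠ insert v (G.neighborSet v)) :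
    IsLocatingDominatingSet G D := by
  refine ⟨hdom, fun u hu v hv huv htrace => hG u v huv ?_⟩
  rw [insert_neighborSet_eq_union_of_isClique_compl hc hu,
    insert_neighborSet_eq_union_of_isClique_compl hc hv, htrace]

lemma isLocatingDominatingSet_of_isIndepSet_compl (hiso : NoIsolatedVertex G)
    (hi : G.IsIndepSet Dᶜ) (hG : ∀ u v, u ≠ v → G.neighborSet u ≠ G.neighborSet v) :
    IsLocatingDominatingSet G D := by
  refine ⟨fun v hv => ?_, fun u hu v hv huv htrace => hG u v huv ?_⟩
  · obtain ⟨u, hadj⟩ := hiso v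
    rw [← SimpleGraph.mem_neighborSet, neighborSet_eq_of_isIndepSet_compl hi hv] at hadj
    exact ⟨u, hadj.1, hadj.2.symm⟩
  · rw [neighborSet_eq_of_isIndepSet_compl hi hu, neighborSet_eq_of_isIndepSet_compl hi hv,
      htrace]

lemma exists_isDominatingSet_isIndepSet_isClique_compl {s : Set V} (hs : G.IsClique s)
    (hsc : G.IsIndepSet sᶜ) :
    ∃ D, IsDominatingSet G D ∧ G.IsIndepSet D ∧ G.IsClique Dᶜ := by
  by_cases hx : ∃ x ∈ s, ∀ v ∈ sᶜ, ¬ G.Adj x v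
  · obtain ⟨x, hxs, hx⟩ := hx
    refine ⟨insert x sᶜ, fun v hv => ⟨x, Set.mem_insert x _, ?_⟩, ?_, ?_⟩
    · simp only [Set.mem_insert_iff, Set.mem_compl_iff, not_or, not_not] at hv
      exact hs hxs hv.2 (Ne.symm hv.1)
    · exact hsc.insert fun v hv _ => ⟨hx v hv, fun hadj => hx v hv hadj.symm⟩
    · exact hs.subset fun v hv => not_not.mp fun h => hv (Or.inr h)
  · push Not at hx
    refine ⟨sᶜ, fun v hv => ?_, hsc, by rwa [compl_compl]⟩
    obtain ⟨w, hw, hadj⟩ := hx v (not_not.mp hv)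
    exact ⟨w, hw, hadj.symm⟩

end

/-- If `G` is a twin-free split graph of order `n` (its vertex set can be partitioned into
a clique and an independent set) with no isolated vertices, then `γ_L(G) ≤ n/2`. -/
theorem locDomNumber_le_half_of_split {V : Type*} [Fintype V] (G : SimpleGraph V)
    (htf : TwinFree G) (hiso : NoIsolatedVertex G)
    (hsplit : ∃ s : Set V, G.IsClique s ∧ ∀ u ∈ sᶜ, ∀ v ∈ sᶜ, ¬ G.Adj u v) :
    2 * locDomNumber G ≤ Fintype.card V := by
  obtain ⟨s, hs, hsc⟩ := hsplit
  obtain ⟨D, hdom, hi, hc⟩ :=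
    exists_isDominatingSet_isIndepSet_isClique_compl hs fun u hu v hv _ => hsc u hu v hv
  refine two_mul_locDomNumber_le_of_compl (D := D) ?_ ?_
  · exact isLocatingDominatingSet_of_isClique_compl hdom hc fun u v huv => (htf u v huv).2
  · exact isLocatingDominatingSet_of_isIndepSet_compl hiso (by rwa [compl_compl])
      fun u v huv => (htf u v huv).1
end

section
/- For every integer k >= 3, the graph H_k has order 2k+4, domination number gamma(H_k) = 2, and location-domination number gamma_L(H_k) = k+2, which is exactly half its order. -/
/-- The graph `H_k`, with vertices `a = inl 0`, `b = inl 1`, `a' = inl 2`, `b' = inl 3`,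
`c_i = inr (inl i)` and `s_i = inr (inr i)`, and edges `b c_i`, `a s_i`, `s_i c_i`
(for all `i`), together with the pendant edges `a a'` and `b b'`. -/
def Hgraph (k : ℕ) : SimpleGraph (Fin 4 ⊕ (Fin k ⊕ Fin k)) :=
  SimpleGraph.fromRel (fun x y =>
    (∃ i : Fin k, x = Sum.inl 1 ∧ y = Sum.inr (Sum.inl i)) ∨
    (∃ i : Fin k, x = Sum.inl 0 ∧ y = Sum.inr (Sum.inr i)) ∨
    (∃ i : Fin k, x = Sum.inr (Sum.inr i) ∧ y = Sum.inr (Sum.inl i)) ∨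
    (x = Sum.inl 0 ∧ y = Sum.inl 2) ∨
    (x = Sum.inl 1 ∧ y = Sum.inl 3))

/-!
`{a, b}` dominates `H_k`, and each pendant pair `{a, a'}`, `{b, b'}` must meet a dominating
set, so `γ(H_k) = 2`. The set `{a, b, s_1, …, s_k}` is locating: `a'`, `b'` and `c_i` are
separated by their neighbours `a`, `b` and `s_i`. Conversely a locating-dominating set `D`
meets each of `{a, a'}`, `{b, b'}` and `{c_i, s_i}`, except possibly for one index `i₀`
(two vertices `c_i, c_j` with `b` as their only possible neighbour in `D` would collide). If
`{c_{i₀}, s_{i₀}}` is missed, then domination forces `a, b ∈ D` and location forces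
`a', b' ∈ D` (else `a'` collides with `s_{i₀}` and `b'` with `c_{i₀}`), so `a` can be counted
in place of the missed pair. Either way `|D| ≥ k + 2`.
-/

theorem Set.SurjOn.ncard_le {α β : Type*} {f : α → β} {s : Set α} {t : Set β}
    (h : Set.SurjOn f s t) (hs : s.Finite) : t.ncard ≤ s.ncard :=
  (Set.ncard_le_ncard h (hs.image f)).trans (Set.ncard_image_le hs)

section Domination

variable {V : Type*} {G : SimpleGraph V} {D E : Set V}

theorem IsDominatingSet.mono (hD : IsDominatingSet G D) (hDE : D ⊆ E) :
    IsDominatingSet G E := fun v hv ↦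
  let ⟨u, hu, huv⟩ := hD v (fun h ↦ hv (hDE h))
  ⟨u, hDE hu, huv⟩

theorem IsDominatingSet.mem_or_mem_of_pendant (hD : IsDominatingSet G D) {u v : V}
    (hv : ∀ w, G.Adj w v → w = u) : u ∈ D ∨ v ∈ D := by
  by_contra! h
  obtain ⟨w, hw, hwv⟩ := hD v h.2
  exact h.1 (hv w hwv ▸ hw)

theorem isLocatingDominatingSet_iff : IsLocatingDominatingSet G D ↔ IsDominatingSet G D ∧
    ∀ u ∉ D, ∀ v ∉ D, (∀ w ∈ D, G.Adj u w ↔ G.Adj v w) → u = v := by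
  refine and_congr_right fun _ ↦ forall₂_congr fun u _ ↦ forall₂_congr fun v _ ↦ ?_
  rw [not_imp_comm, not_ne_iff, Set.ext_iff]
  simp only [Set.mem_ofPred_eq, and_congr_right_iff]

theorem IsLocatingDominatingSet.eq_of_forall_adj_iff (hD : IsLocatingDominatingSet G D)
    {u v : V} (hu : u ∉ D) (hv : v ∉ D) (h : ∀ w ∈ D, G.Adj u w ↔ G.Adj v w) : u = v :=
  (isLocatingDominatingSet_iff.1 hD).2 u hu v hv h

end Domination

namespace Hgraph

variable {k : ℕ}

abbrev a : Fin 4 ⊕ (Fin k ⊕ Fin k) := .inl 0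
abbrev b : Fin 4 ⊕ (Fin k ⊕ Fin k) := .inl 1
abbrev a' : Fin 4 ⊕ (Fin k ⊕ Fin k) := .inl 2
abbrev b' : Fin 4 ⊕ (Fin k ⊕ Fin k) := .inl 3
abbrev c (i : Fin k) : Fin 4 ⊕ (Fin k ⊕ Fin k) := .inr (.inl i)
abbrev s (i : Fin k) : Fin 4 ⊕ (Fin k ⊕ Fin k) := .inr (.inr i)

theorem adj_a'_iff {x : Fin 4 ⊕ (Fin k ⊕ Fin k)} : (Hgraph k).Adj x a' ↔ x = a := by
  rcases x with f | j | j <;> simp [Hgraph]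
  omega

theorem adj_b'_iff {x : Fin 4 ⊕ (Fin k ⊕ Fin k)} : (Hgraph k).Adj x b' ↔ x = b := by
  rcases x with f | j | j <;> simp [Hgraph]
  omega

theorem adj_c_iff {x : Fin 4 ⊕ (Fin k ⊕ Fin k)} {i : Fin k} :
    (Hgraph k).Adj x (c i) ↔ x = b ∨ x = s i := by
  rcases x with f | j | j <;> simp [Hgraph, eq_comm]

theorem adj_s_iff {x : Fin 4 ⊕ (Fin k ⊕ Fin k)} {i : Fin k} :
    (Hgraph k).Adj x (s i) ↔ x = a ∨ x = c i := by
  rcases x with f | j | j <;> simp [Hgraph, eq_comm]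

theorem isDominatingSet_pair : IsDominatingSet (Hgraph k) {a, b} := by
  rintro (p | i | i) hv
  · fin_cases p
    · simp at hv
    · simp at hv
    · exact ⟨a, by simp, adj_a'_iff.2 rfl⟩
    · exact ⟨b, by simp, adj_b'_iff.2 rfl⟩
  · exact ⟨b, by simp, adj_c_iff.2 (.inl rfl)⟩
  · exact ⟨a, by simp, adj_s_iff.2 (.inl rfl)⟩

theorem two_le_ncard_of_isDominatingSet {D : Set (Fin 4 ⊕ (Fin k ⊕ Fin k))}
    (hD : IsDominatingSet (Hgraph k) D) : 2 ≤ D.ncard := by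
  obtain ⟨x, hxD, hx⟩ : ∃ x ∈ D, x = a ∨ x = a' := by
    rcases hD.mem_or_mem_of_pendant fun _ ↦ adj_a'_iff.1 with h | h
    exacts [⟨a, h, .inl rfl⟩, ⟨a', h, .inr rfl⟩]
  obtain ⟨y, hyD, hy⟩ : ∃ y ∈ D, y = b ∨ y = b' := by
    rcases hD.mem_or_mem_of_pendant fun _ ↦ adj_b'_iff.1 with h | h
    exacts [⟨b, h, .inl rfl⟩, ⟨b', h, .inr rfl⟩]
  have hxy : x ≠ y := by rcases hx with rfl | rfl <;> rcases hy with rfl | rfl <;> simp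
  calc 2 = ({x, y} : Set _).ncard := (Set.ncard_pair hxy).symm
    _ ≤ D.ncard := Set.ncard_le_ncard (Set.pair_subset hxD hyD)

theorem dominationNumber_eq : dominationNumber (Hgraph k) = 2 :=
  IsLeast.csInf_eq ⟨⟨{a, b}, isDominatingSet_pair, Set.ncard_pair (by simp)⟩,
    by rintro n ⟨D, hD, rfl⟩; exact two_le_ncard_of_isDominatingSet hD⟩

def locatingSet (k : ℕ) : Set (Fin 4 ⊕ (Fin k ⊕ Fin k)) := insert a (insert b (Set.range s))

theorem ncard_locatingSet : (locatingSet k).ncard = k + 2 := by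
  rw [locatingSet, Set.ncard_insert_of_notMem (by simp), Set.ncard_insert_of_notMem (by simp),
    Set.ncard_range_of_injective (fun i j h ↦ by simpa using h), Nat.card_fin]

theorem isLocatingDominatingSet_locatingSet :
    IsLocatingDominatingSet (Hgraph k) (locatingSet k) := by
  refine isLocatingDominatingSet_iff.2
    ⟨isDominatingSet_pair.mono (Set.insert_subset_insert (by simp)), ?_⟩
  have outside : ∀ x ∉ locatingSet k, x = a' ∨ x = b' ∨ ∃ i, x = c i := by
    rintro (p | i | i) hx
    · fin_cases p <;> simp_all [locatingSet]
    · exact .inr (.inr ⟨i, rfl⟩)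
    · simp [locatingSet] at hx
  intro u hu v hv h
  have ha := h a (by simp [locatingSet])
  have hb := h b (by simp [locatingSet])
  have hs i := h (s i) (by simp [locatingSet])
  rcases outside u hu with rfl | rfl | ⟨i, rfl⟩ <;> rcases outside v hv with rfl | rfl | ⟨j, rfl⟩
  all_goals first
    | rfl
    | simpa [Hgraph] using hs i
    | simpa [Hgraph] using hs j
    | simp [Hgraph] at ha hb

section LowerBound

variable {D : Set (Fin 4 ⊕ (Fin k ⊕ Fin k))} {i : Fin k}

theorem eq_of_notMem_of_notMem (hD : IsLocatingDominatingSet (Hgraph k) D)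
    (hci : c i ∉ D) (hsi : s i ∉ D) {j : Fin k} (hcj : c j ∉ D) (hsj : s j ∉ D) : i = j := by
  have hcij : c i = c j := hD.eq_of_forall_adj_iff hci hcj fun w hw ↦ by
    rw [(Hgraph k).adj_comm, adj_c_iff, (Hgraph k).adj_comm, adj_c_iff]
    simp [ne_of_mem_of_not_mem hw hsi, ne_of_mem_of_not_mem hw hsj]
  simpa using hcij

theorem a_mem_of_notMem (hD : IsDominatingSet (Hgraph k) D) (hc : c i ∉ D) (hs : s i ∉ D) :
    a ∈ D := by
  obtain ⟨w, hw, hws⟩ := hD (s i) hs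
  rcases adj_s_iff.1 hws with rfl | rfl
  exacts [hw, absurd hw hc]

theorem b_mem_of_notMem (hD : IsDominatingSet (Hgraph k) D) (hc : c i ∉ D) (hs : s i ∉ D) :
    b ∈ D := by
  obtain ⟨w, hw, hwc⟩ := hD (c i) hc
  rcases adj_c_iff.1 hwc with rfl | rfl
  exacts [hw, absurd hw hs]

theorem a'_mem_of_notMem (hD : IsLocatingDominatingSet (Hgraph k) D) (hc : c i ∉ D)
    (hs : s i ∉ D) : a' ∈ D := by
  by_contra ha'
  have : a' = s i := hD.eq_of_forall_adj_iff ha' hs fun w hw ↦ by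
    rw [(Hgraph k).adj_comm, adj_a'_iff, (Hgraph k).adj_comm, adj_s_iff]
    simp [ne_of_mem_of_not_mem hw hc]
  simp at this

theorem b'_mem_of_notMem (hD : IsLocatingDominatingSet (Hgraph k) D) (hc : c i ∉ D)
    (hs : s i ∉ D) : b' ∈ D := by
  by_contra hb'
  have : b' = c i := hD.eq_of_forall_adj_iff hb' hc fun w hw ↦ by
    rw [(Hgraph k).adj_comm, adj_b'_iff, (Hgraph k).adj_comm, adj_c_iff]
    simp [ne_of_mem_of_not_mem hw hs]
  simp at this

-- The partition of the vertices into `{a, a'}`, `{b, b'}` and the `{c i, s i}`.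
def block : Fin 4 ⊕ (Fin k ⊕ Fin k) → Fin 2 ⊕ Fin k
  | .inl p => .inl ⟨p % 2, Nat.mod_lt _ two_pos⟩
  | .inr (.inl i) => .inr i
  | .inr (.inr i) => .inr i

theorem add_two_le_ncard (hD : IsLocatingDominatingSet (Hgraph k) D) : k + 2 ≤ D.ncard := by
  have hcard : Nat.card (Fin 2 ⊕ Fin k) = k + 2 := by simp [add_comm]
  rw [← hcard, ← Set.ncard_univ]
  by_cases hmiss : ∃ i, c i ∉ D ∧ s i ∉ D
  · obtain ⟨i, hc, hs⟩ := hmiss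
    -- `a` replaces the missed part `{c i, s i}`, since `a'` now covers `{a, a'}`.
    refine Set.SurjOn.ncard_le (f := Function.update block a (.inr i)) ?_ (Set.toFinite D)
    rintro (p | j) -
    · fin_cases p
      · exact ⟨a', a'_mem_of_notMem hD hc hs, by simp [block]⟩
      · exact ⟨b, b_mem_of_notMem hD.1 hc hs, by simp [block]⟩
    · by_cases hji : j = i
      · exact ⟨a, a_mem_of_notMem hD.1 hc hs, by simp [hji]⟩
      · obtain h | h : c j ∈ D ∨ s j ∈ D := by
          by_contra! h
          exact hji (eq_of_notMem_of_notMem hD hc hs h.1 h.2).symm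
        exacts [⟨c j, h, by simp [block]⟩, ⟨s j, h, by simp [block]⟩]
  · push Not at hmiss
    refine Set.SurjOn.ncard_le (f := block) ?_ (Set.toFinite D)
    rintro (p | j) -
    · fin_cases p
      · rcases hD.1.mem_or_mem_of_pendant fun _ ↦ adj_a'_iff.1 with h | h
        exacts [⟨a, h, rfl⟩, ⟨a', h, rfl⟩]
      · rcases hD.1.mem_or_mem_of_pendant fun _ ↦ adj_b'_iff.1 with h | h
        exacts [⟨b, h, rfl⟩, ⟨b', h, rfl⟩]
    · by_cases h : c j ∈ D
      exacts [⟨c j, h, rfl⟩, ⟨s j, hmiss j h, rfl⟩]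

end LowerBound

theorem locDomNumber_eq : locDomNumber (Hgraph k) = k + 2 :=
  IsLeast.csInf_eq ⟨⟨locatingSet k, isLocatingDominatingSet_locatingSet, ncard_locatingSet⟩,
    by rintro n ⟨D, hD, rfl⟩; exact add_two_le_ncard hD⟩

end Hgraph

theorem Hgraph_numbers_general (k : ℕ) :
    Fintype.card (Fin 4 ⊕ (Fin k ⊕ Fin k)) = 2 * k + 4 ∧
      dominationNumber (Hgraph k) = 2 ∧
      locDomNumber (Hgraph k) = k + 2 ∧
      2 * locDomNumber (Hgraph k) = Fintype.card (Fin 4 ⊕ (Fin k ⊕ Fin k)) := by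
  have hcard : Fintype.card (Fin 4 ⊕ (Fin k ⊕ Fin k)) = 2 * k + 4 := by simp; omega
  exact ⟨hcard, Hgraph.dominationNumber_eq, Hgraph.locDomNumber_eq,
    by rw [Hgraph.locDomNumber_eq, hcard]; ring⟩

/-- For every integer `k ≥ 3`, the graph `H_k` has order `2k + 4`, domination number
`γ(H_k) = 2`, and location-domination number `γ_L(H_k) = k + 2`, which is exactly half
its order. -/
theorem Hgraph_numbers (k : ℕ) (hk : 3 ≤ k) :
    Fintype.card (Fin 4 ⊕ (Fin k ⊕ Fin k)) = 2 * k + 4 ∧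
      dominationNumber (Hgraph k) = 2 ∧
      locDomNumber (Hgraph k) = k + 2 ∧
      2 * locDomNumber (Hgraph k) = Fintype.card (Fin 4 ⊕ (Fin k ⊕ Fin k)) :=
  Hgraph_numbers_general k
end

section
/- Let H be a graph and let G be the corona of H, obtained from H by adding, for each vertex v of H, a new vertex v' together with the pendant edge v v'. Then every dominating set of G is a locating-dominating set of G. -/
/-- The corona of a graph `H`: for each vertex `v` of `H` (here `Sum.inl v`), add a new
pendant vertex `v' = Sum.inr v` adjacent only to `v`. -/
def Corona {V : Type*} (H : SimpleGraph V) : SimpleGraph (V ⊕ V) where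
  Adj x y :=
    match x, y with
    | Sum.inl a, Sum.inl b => H.Adj a b
    | Sum.inl a, Sum.inr b => a = b
    | Sum.inr a, Sum.inl b => b = a
    | Sum.inr _, Sum.inr _ => False
  symm := by
    constructor
    rintro (a | a) (b | b) h
    · exact h.symm
    · exact h
    · exact h
    · exact h.elim
  loopless := by
    constructor
    rintro (a | a) h
    · exact H.irrefl h
    · exact h

/-!
Every vertex `u` of the corona is adjacent to its partner `u.swap` (a vertex of `H` and its
pendant copy), and the pendant copy is adjacent to nothing else. Hence a dominating set contains
the partner of each vertex it misses, and if two missed vertices `u`, `v` had the same trace on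
`D`, each would be adjacent to the other's partner, which forces `u = v`.
-/

namespace Corona

variable {V : Type*} {H : SimpleGraph V}

@[simp]
lemma adj_inl_inr {a b : V} : (Corona H).Adj (.inl a) (.inr b) ↔ a = b := Iff.rfl

@[simp]
lemma adj_inr_inl {a b : V} : (Corona H).Adj (.inr a) (.inl b) ↔ b = a := Iff.rfl

@[simp]
lemma not_adj_inr_inr {a b : V} : ¬(Corona H).Adj (.inr a) (.inr b) := id

lemma adj_swap (u : V ⊕ V) : (Corona H).Adj u u.swap := by
  cases u <;> simp

lemma eq_of_adj_swap {u v : V ⊕ V} (huv : (Corona H).Adj u v.swap)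
    (hvu : (Corona H).Adj v u.swap) : u = v := by
  rcases u with a | a <;> rcases v with b | b <;> simp_all

lemma inl_mem_of_isDominatingSet {D : Set (V ⊕ V)} (hD : IsDominatingSet (Corona H) D)
    {a : V} (ha : Sum.inr a ∉ D) : Sum.inl a ∈ D := by
  obtain ⟨w, hwD, hw⟩ := hD _ ha
  rcases w with b | b
  · simp_all
  · simp at hw

lemma swap_mem_of_isDominatingSet {D : Set (V ⊕ V)} (hD : IsDominatingSet (Corona H) D)
    {u : V ⊕ V} (hu : u ∉ D) : u.swap ∈ D := by
  rcases u with a | a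
  · by_contra h
    exact hu (inl_mem_of_isDominatingSet hD h)
  · exact inl_mem_of_isDominatingSet hD hu

end Corona

open Corona in
/-- If `G` is the corona of a graph `H`, then every dominating set of `G` is a
locating-dominating set of `G`. -/
theorem corona_dominating_is_locatingDominating {V : Type*} (H : SimpleGraph V)
    (D : Set (V ⊕ V)) (hD : IsDominatingSet (Corona H) D) :
    IsLocatingDominatingSet (Corona H) D := by
  refine ⟨hD, fun u hu v hv hne htrace => hne ?_⟩
  have adj_swap_of_trace_eq {x y : V ⊕ V} (hx : x ∉ D)
      (h : {w | w ∈ D ∧ (Corona H).Adj x w} = {w | w ∈ D ∧ (Corona H).Adj y w}) :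
      (Corona H).Adj y x.swap := by
    have hmem : x.swap ∈ {w | w ∈ D ∧ (Corona H).Adj x w} :=
      ⟨swap_mem_of_isDominatingSet hD hx, adj_swap x⟩
    exact (h ▸ hmem).2
  exact eq_of_adj_swap (adj_swap_of_trace_eq hv htrace.symm) (adj_swap_of_trace_eq hu htrace)
end
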